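/- arXiv:2509.09418 — 6 statements merged into one kernel-verified Lean document; each statement's English description precedes it below -/
import Mathlib

section
/- Let r ≥ 2, let a = (a_1,…,a_r) be a sequence of positive integers, and let D be a common multiple of a_1,…,a_r. Then for every n ≥ 0, as an equality of rational numbers, p_a(n) = (1/(r−1)!) · ∑ ∏_{ℓ=1}^{r−1} ((n − a_1j_1 − ⋯ − a_rj_r)/D + ℓ), where the sum runs over all tuples (j_1,…,j_r) of integers with 0 ≤ j_i ≤ D/a_i − 1 for each i and a_1j_1 + ⋯ + a_rj_r ≡ n (mod D). -/
open Finset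

private lemma prod_Icc_ascFactorial (m : ℕ) : ∀ k : ℕ,
    (∏ ℓ ∈ Finset.Icc 1 k, (m + ℓ)) = (m + 1).ascFactorial k
  | 0 => by simp
  | k + 1 => by
    rw [Finset.prod_Icc_succ_top (by omega), prod_Icc_ascFactorial m k,
      Nat.ascFactorial_succ, Nat.mul_comm]
    congr 1
    omega

private lemma prod_Icc_eq_choose (m k : ℕ) :
    (∏ ℓ ∈ Finset.Icc 1 k, (m + ℓ)) = k.factorial * (m + k).choose k := by
  rw [prod_Icc_ascFactorial, Nat.ascFactorial_eq_factorial_mul_choose]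

private lemma card_piAntidiag_univ (k m : ℕ) :
    ((Finset.univ : Finset (Fin k)).piAntidiag m).card = (k + m - 1).choose m := by
  classical
  rw [← Finset.map_sym_eq_piAntidiag, Finset.card_map]
  have huniv : (Finset.univ : Finset (Fin k)).sym m = Finset.univ := by
    ext s; simp [Finset.mem_sym_iff]
  rw [huniv, Finset.card_univ, Sym.card_sym_eq_choose, Fintype.card_fin]

/-- For a sequence `a = (a_1,…,a_r)` of positive integers, the restricted partition
function `p_a(n)` counts tuples `(x_1,…,x_r)` of nonnegative integers with
`a_1 x_1 + ⋯ + a_r x_r = n`.  If `D` is a common multiple of the `a_i`, then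
`p_a(n) = (1/(r-1)!) ∑ ∏_{ℓ=1}^{r-1} ((n - a_1 j_1 - ⋯ - a_r j_r)/D + ℓ)`,
the sum over `0 ≤ j_i ≤ D/a_i - 1` with `a_1 j_1 + ⋯ + a_r j_r ≡ n (mod D)`. -/
theorem stmt_0 (r : ℕ) (hr : 2 ≤ r) (a : Fin r → ℕ) (ha : ∀ i, 0 < a i)
    (D : ℕ) (hD : 0 < D) (hDa : ∀ i, a i ∣ D) (n : ℕ) :
    (Set.ncard {x : Fin r → ℕ | ∑ i, a i * x i = n} : ℚ) =
      (1 / (Nat.factorial (r - 1) : ℚ)) *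
        ∑ j ∈ (Fintype.piFinset fun i : Fin r => Finset.range (D / a i)).filter
            (fun j => (∑ i, a i * j i) % D = n % D),
          ∏ ℓ ∈ Finset.Icc 1 (r - 1),
            (((n : ℚ) - ∑ i, (a i : ℚ) * (j i : ℚ)) / (D : ℚ) + (ℓ : ℚ)) := by
  classical
  have haq : ∀ i, a i * (D / a i) = D := fun i => Nat.mul_div_cancel' (hDa i)
  have hqpos : ∀ i, 0 < D / a i := fun i => Nat.div_pos (Nat.le_of_dvd hD (hDa i)) (ha i)
  obtain ⟨F, hF⟩ : ∃ F : Finset (Fin r → ℕ),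
      F = (Fintype.piFinset fun i : Fin r => Finset.range (n+1)).filter
        (fun x => ∑ i, a i * x i = n) := ⟨_, rfl⟩
  -- Step A : the set is the finset F
  have hset : {x : Fin r → ℕ | ∑ i, a i * x i = n} = ↑F := by
    ext x
    simp only [hF, Set.mem_setOf_eq, Finset.coe_filter, Fintype.mem_piFinset,
      Finset.mem_range, Set.mem_setOf_eq]
    constructor
    · intro hx
      refine ⟨fun i => ?_, hx⟩
      have h1 : a i * x i ≤ n := hx ▸ Finset.single_le_sum
        (f := fun i => a i * x i) (fun _ _ => Nat.zero_le _) (Finset.mem_univ i)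
      have h2 := Nat.le_mul_of_pos_left (x i) (ha i)
      omega
    · exact fun h => h.2
  rw [hset, Set.ncard_coe_finset]
  -- the splitting identity
  have hsplit : ∀ x : Fin r → ℕ, ∑ i, a i * x i =
      (∑ i, a i * (x i % (D / a i))) + D * ∑ i, x i / (D / a i) := by
    intro x
    rw [Finset.mul_sum, ← Finset.sum_add_distrib]
    refine Finset.sum_congr rfl fun i _ => ?_
    conv_lhs => rw [← Nat.div_add_mod (x i) (D / a i)]
    rw [Nat.mul_add, ← Nat.mul_assoc, haq i]
    omega
  -- Step B : fiberwise count
  have hmaps : ∀ x ∈ F, (fun i => x i % (D / a i)) ∈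
      (Fintype.piFinset fun i : Fin r => Finset.range (D / a i)).filter
        (fun j => (∑ i, a i * j i) % D = n % D) := by
    intro x hx
    rw [hF, Finset.mem_filter] at hx
    obtain ⟨-, hx⟩ := hx
    rw [Finset.mem_filter]
    constructor
    · rw [Fintype.mem_piFinset]
      exact fun i => Finset.mem_range.mpr (Nat.mod_lt _ (hqpos i))
    · show (∑ i, a i * (x i % (D / a i))) % D = n % D
      have h1 := hsplit x
      rw [hx] at h1
      conv_rhs => rw [h1]
      rw [Nat.add_mul_mod_self_left]
  -- key per-term identity
  have key : ∀ j ∈ (Fintype.piFinset fun i : Fin r => Finset.range (D / a i)).filter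
      (fun j => (∑ i, a i * j i) % D = n % D),
      (∏ ℓ ∈ Finset.Icc 1 (r - 1),
          (((n : ℚ) - ∑ i, (a i : ℚ) * (j i : ℚ)) / (D : ℚ) + (ℓ : ℚ)))
        = (Nat.factorial (r - 1) : ℚ) *
          ((F.filter fun x => (fun i => x i % (D / a i)) = j).card : ℚ) := by
    intro j hj
    rw [Finset.mem_filter, Fintype.mem_piFinset] at hj
    obtain ⟨hjlt, hjmod⟩ := hj
    have hjlt' : ∀ i, j i < D / a i := fun i => Finset.mem_range.mp (hjlt i)
    have hScast : (∑ i, (a i : ℚ) * (j i : ℚ)) = ((∑ i, a i * j i : ℕ) : ℚ) := by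
      push_cast; rfl
    rcases le_or_gt (∑ i, a i * j i) n with hle | hlt
    · -- in-range case
      obtain ⟨m, hm⟩ := (Nat.modEq_iff_dvd' hle).mp hjmod
      -- fiber has card (r + m - 1).choose m
      have hfib : (F.filter fun x => (fun i => x i % (D / a i)) = j).card =
          ((Finset.univ : Finset (Fin r)).piAntidiag m).card := by
        apply Finset.card_bij' (i := fun x _ => fun i => x i / (D / a i))
          (j := fun y _ => fun i => j i + (D / a i) * y i)
        · intro x hx
          rw [Finset.mem_filter] at hx
          obtain ⟨hxF, hxj⟩ := hx
          rw [hF, Finset.mem_filter] at hxF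
          obtain ⟨-, hxn⟩ := hxF
          rw [Finset.mem_piAntidiag]
          refine ⟨?_, fun i _ => Finset.mem_univ i⟩
          have h1 := hsplit x
          rw [hxn] at h1
          have h2 : ∀ i, x i % (D / a i) = j i := fun i => congrFun hxj i
          simp only [h2] at h1
          have h3 : D * (∑ i, x i / (D / a i)) = D * m := by omega
          exact Nat.eq_of_mul_eq_mul_left hD h3
        · intro y hy
          rw [Finset.mem_piAntidiag] at hy
          obtain ⟨hym, -⟩ := hy
          have hsum : ∑ i, a i * (j i + (D / a i) * y i) = n := by
            have : ∀ i, a i * (j i + (D / a i) * y i) = a i * j i + D * y i := by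
              intro i
              rw [Nat.mul_add, ← Nat.mul_assoc, haq i]
            rw [Finset.sum_congr rfl fun i _ => this i, Finset.sum_add_distrib,
              ← Finset.mul_sum, hym]
            omega
          rw [Finset.mem_filter]
          constructor
          · rw [hF, Finset.mem_filter]
            refine ⟨?_, hsum⟩
            rw [Fintype.mem_piFinset]
            intro i
            rw [Finset.mem_range]
            have h1 : a i * (j i + (D / a i) * y i) ≤ n := hsum ▸ Finset.single_le_sum
              (f := fun i => a i * (j i + (D / a i) * y i))
              (fun _ _ => Nat.zero_le _) (Finset.mem_univ i)
            have h2 := Nat.le_mul_of_pos_left (j i + (D / a i) * y i) (ha i)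
            omega
          · funext i
            rw [Nat.add_mul_mod_self_left, Nat.mod_eq_of_lt (hjlt' i)]
        · intro x hx
          rw [Finset.mem_filter] at hx
          have h2 : ∀ i, x i % (D / a i) = j i := fun i => congrFun hx.2 i
          funext i
          rw [← h2 i, Nat.mod_add_div]
        · intro y hy
          funext i
          rw [Nat.add_mul_div_left _ _ (hqpos i), Nat.div_eq_of_lt (hjlt' i), Nat.zero_add]
      rw [hfib, card_piAntidiag_univ]
      clear hfib
      -- now the rational product
      have hmq : ((n : ℚ) - ∑ i, (a i : ℚ) * (j i : ℚ)) / (D : ℚ) = (m : ℚ) := by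
        rw [hScast]
        have h1 : (n : ℚ) - ((∑ i, a i * j i : ℕ) : ℚ) = ((D * m : ℕ) : ℚ) := by
          rw [← hm]
          push_cast [hle]
          ring
        rw [h1]
        push_cast
        rw [mul_comm, mul_div_assoc, div_self (by positivity), mul_one]
      rw [hmq]
      have hprod : (∏ ℓ ∈ Finset.Icc 1 (r - 1), ((m : ℚ) + (ℓ : ℚ)))
          = ((∏ ℓ ∈ Finset.Icc 1 (r - 1), (m + ℓ) : ℕ) : ℚ) := by
        push_cast; rfl
      rw [hprod, prod_Icc_eq_choose]
      have hch : (m + (r - 1)).choose (r - 1) = (r + m - 1).choose m := by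
        have h1 : m + (r - 1) = r + m - 1 := by omega
        rw [h1]
        have h2 : r + m - 1 - m = r - 1 := by omega
        rw [← h2]
        exact Nat.choose_symm (n := r + m - 1) (k := m) (by omega)
      rw [hch]
      push_cast
      ring
    · -- out-of-range case : both sides are zero
      have hfib : (F.filter fun x => (fun i => x i % (D / a i)) = j) = ∅ := by
        rw [Finset.filter_eq_empty_iff]
        intro x hx
        rw [hF, Finset.mem_filter] at hx
        obtain ⟨-, hxn⟩ := hx
        intro hxj
        have h2 : ∀ i, x i % (D / a i) = j i := fun i => congrFun hxj i
        have h3 : ∑ i, a i * j i ≤ ∑ i, a i * x i := by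
          refine Finset.sum_le_sum fun i _ => ?_
          exact Nat.mul_le_mul_left _ (h2 i ▸ Nat.mod_le _ _)
        omega
      rw [hfib]
      obtain ⟨t, ht⟩ := (Nat.modEq_iff_dvd' hlt.le).mp hjmod.symm
      have ht1 : 1 ≤ t := by
        rcases Nat.eq_zero_or_pos t with h | h
        · subst h; omega
        · exact h
      have htr : t ≤ r - 1 := by
        have hb : ∀ i, a i * j i + 1 ≤ D := by
          intro i
          have h1 : a i * (j i + 1) ≤ a i * (D / a i) :=
            Nat.mul_le_mul_left _ (hjlt' i)
          rw [haq i] at h1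
          have h2 := ha i
          nlinarith
        have hS : (∑ i, a i * j i) + r ≤ r * D := by
          calc (∑ i, a i * j i) + r = ∑ i, (a i * j i + 1) := by
                rw [Finset.sum_add_distrib, Finset.sum_const, Finset.card_univ,
                  Fintype.card_fin, smul_eq_mul, Nat.mul_one]
            _ ≤ ∑ _i : Fin r, D := Finset.sum_le_sum fun i _ => hb i
            _ = r * D := by rw [Finset.sum_const, Finset.card_univ,
                Fintype.card_fin, smul_eq_mul]
        have h4 : D * t < r * D := by omega
        rw [Nat.mul_comm r D] at h4
        have := Nat.lt_of_mul_lt_mul_left h4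
        omega
      have hzero : ((n : ℚ) - ∑ i, (a i : ℚ) * (j i : ℚ)) / (D : ℚ) + (t : ℚ) = 0 := by
        rw [hScast]
        have h1 : ((∑ i, a i * j i : ℕ) : ℚ) = (n : ℚ) + (D : ℚ) * (t : ℚ) := by
          have := ht
          have h2 : (∑ i, a i * j i) = n + D * t := by omega
          rw [h2]; push_cast; ring
        rw [h1]
        field_simp
        ring
      rw [Finset.prod_eq_zero (Finset.mem_Icc.mpr ⟨ht1, htr⟩) hzero]
      simp
  -- final assembly
  have hcard : F.card = ∑ j ∈ (Fintype.piFinset fun i : Fin r =>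
        Finset.range (D / a i)).filter (fun j => (∑ i, a i * j i) % D = n % D),
      (F.filter fun x => (fun i => x i % (D / a i)) = j).card :=
    Finset.card_eq_sum_card_fiberwise hmaps
  have hsum : (∑ j ∈ (Fintype.piFinset fun i : Fin r => Finset.range (D / a i)).filter
        (fun j => (∑ i, a i * j i) % D = n % D),
        ∏ ℓ ∈ Finset.Icc 1 (r - 1),
          (((n : ℚ) - ∑ i, (a i : ℚ) * (j i : ℚ)) / (D : ℚ) + (ℓ : ℚ)))
      = (Nat.factorial (r - 1) : ℚ) *
        ∑ j ∈ (Fintype.piFinset fun i : Fin r => Finset.range (D / a i)).filter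
          (fun j => (∑ i, a i * j i) % D = n % D),
          ((F.filter fun x => (fun i => x i % (D / a i)) = j).card : ℚ) := by
    rw [Finset.mul_sum]
    exact Finset.sum_congr rfl key
  rw [hsum, one_div, inv_mul_cancel_left₀ (by exact_mod_cast (Nat.factorial_pos (r-1)).ne')]
  rw [hcard]
  push_cast
  rfl
end

section
/- Let r ≥ 2, let a = (a_1,…,a_r) be a sequence of positive integers, and let D be a common multiple of a_1,…,a_r. Then p_a(n) is a quasi-polynomial of degree r − 1 with period D: there exist functions d_0, d_1, …, d_{r−1} : ℕ → ℚ such that d_m(n + D) = d_m(n) for all 0 ≤ m ≤ r − 1 and all n ≥ 0, p_a(n) = d_{r−1}(n)·n^{r−1} + ⋯ + d_1(n)·n + d_0(n) for all n ≥ 0, and d_{r−1} is not identically zero. -/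
/-!
Write each `x i = y i + (D / a i) * z i` with `y i < D / a i`. Then
`∑ i, a i * x i = s + D * ∑ i, z i` with `s = ∑ i, a i * y i < r * D`, so by stars and bars the
digit vector `y` contributes `(k + r - 1).choose (r - 1)` solutions when `n = s + D * k`, and none
otherwise. On the residue class of `s` this count is the value at `n` of one polynomial of degree
`r - 1`: the binomial coefficient as a polynomial in `k = (n - s) / D`, whose roots
`k = -1, …, -(r - 1)` are exactly the values `n < s` of the class. Summing over `y` gives one
polynomial per residue class, with leading coefficient a positive multiple of
`((r - 1)! * D ^ (r - 1))⁻¹`.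
-/

open Finset Polynomial
open scoped Nat

section Counting

variable {ι : Type*}

def piDivModEquiv (b : ι → ℕ) [∀ i, NeZero (b i)] : (ι → ℕ) ≃ (∀ i, Fin (b i)) × (ι → ℕ) :=
  ((Equiv.piCongrRight fun i ↦ Nat.divModEquiv (b i)).trans
    (Equiv.arrowProdEquivProdArrow _ _ _)).trans (Equiv.prodComm _ _)

@[simp]
theorem piDivModEquiv_symm_apply (b : ι → ℕ) [∀ i, NeZero (b i)] (y : ∀ i, Fin (b i))
    (z : ι → ℕ) (i : ι) : (piDivModEquiv b).symm (y, z) i = z i * b i + y i :=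
  rfl

theorem Nat.div_ne_zero_of_dvd {a D : ℕ} (hD : D ≠ 0) (h : a ∣ D) : D / a ≠ 0 :=
  (Nat.div_ne_zero_iff_of_dvd h).2 ⟨hD, ne_zero_of_dvd_ne_zero hD h⟩

variable [Fintype ι]

theorem finite_add_mul_sum_eq {D : ℕ} (hD : D ≠ 0) (s n : ℕ) :
    Finite {z : ι → ℕ // s + D * ∑ i, z i = n} := by
  refine (Set.Finite.subset (Set.Finite.pi (t := fun _ ↦ Set.Iic n)
    fun _ ↦ Set.finite_Iic n) fun z (hz : s + D * ∑ i, z i = n) i _ ↦ ?_).to_subtype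
  have := single_le_sum (fun j _ ↦ Nat.zero_le (z j)) (mem_univ i)
  have := Nat.le_mul_of_pos_left (∑ j, z j) (Nat.pos_of_ne_zero hD)
  simp only [Set.mem_Iic]
  omega

theorem sum_mul_lt_card_mul [Nonempty ι] {a : ι → ℕ} {D : ℕ} (hDa : ∀ i, a i ∣ D)
    (y : ∀ i, Fin (D / a i)) : ∑ i, a i * (y i : ℕ) < Fintype.card ι * D := by
  calc ∑ i, a i * (y i : ℕ) < ∑ _i : ι, D :=
        sum_lt_sum_of_nonempty univ_nonempty fun i _ ↦ (Nat.lt_div_iff_mul_lt' (hDa i) _).1 (y i).2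
    _ = Fintype.card ι * D := by rw [sum_const, card_univ, smul_eq_mul]

variable [DecidableEq ι]

theorem natCard_sum_eq_choose {q : ℕ} (hq : Fintype.card ι = q + 1) (k : ℕ) :
    Nat.card {z : ι → ℕ // ∑ i, z i = k} = (k + q).choose q := by
  rw [← Nat.card_congr (Sym.equivNatSumOfFintype ι k), Nat.card_eq_fintype_card,
    Sym.card_sym_eq_choose, hq, show q + 1 + k - 1 = k + q by omega, Nat.choose_symm_add]

theorem natCard_eq_sum_natCard_fiber {a : ι → ℕ} {D : ℕ} (hD : D ≠ 0) (hDa : ∀ i, a i ∣ D)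
    (n : ℕ) :
    Nat.card {x : ι → ℕ // ∑ i, a i * x i = n} =
      ∑ y : ∀ i, Fin (D / a i), Nat.card {z : ι → ℕ // ∑ i, a i * y i + D * ∑ i, z i = n} := by
  have : ∀ i, NeZero (D / a i) := fun i ↦ ⟨Nat.div_ne_zero_of_dvd hD (hDa i)⟩
  set e := piDivModEquiv fun i ↦ D / a i
  have hsum (y : ∀ i, Fin (D / a i)) (z : ι → ℕ) :
      ∑ i, a i * e.symm (y, z) i = ∑ i, a i * y i + D * ∑ i, z i := by
    simp only [e, piDivModEquiv_symm_apply, mul_add, mul_sum, sum_add_distrib]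
    rw [add_comm]
    congr 1
    refine sum_congr rfl fun i _ ↦ ?_
    rw [mul_comm (z i), ← mul_assoc, Nat.mul_div_cancel' (hDa i)]
  have := fun y : ∀ i, Fin (D / a i) ↦ finite_add_mul_sum_eq (ι := ι) hD (∑ i, a i * y i) n
  calc Nat.card {x : ι → ℕ // ∑ i, a i * x i = n}
      = Nat.card {p : (∀ i, Fin (D / a i)) × (ι → ℕ) // ∑ i, a i * e.symm p i = n} :=
        Nat.card_congr (e.symm.subtypeEquiv fun _ ↦ Iff.rfl).symm
    _ = Nat.card (Σ y : ∀ i, Fin (D / a i),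
          {z : ι → ℕ // ∑ i, a i * y i + D * ∑ i, z i = n}) :=
        Nat.card_congr ((Equiv.subtypeEquivRight fun p ↦ by rw [hsum]).trans
          (Equiv.subtypeProdEquivSigmaSubtype
            fun (y : ∀ i, Fin (D / a i)) (z : ι → ℕ) ↦ ∑ i, a i * y i + D * ∑ i, z i = n))
    _ = _ := Nat.card_sigma

end Counting

/-- The polynomial in `n` whose value at `n = s + D * k` is `(k + q).choose q`; its roots
`s - D, …, s - q * D` make it also agree with the fiber count just below `s`. -/
noncomputable def choosePoly (q D s : ℕ) : ℚ[X] :=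
  C (q ! : ℚ)⁻¹ * (ascPochhammer ℚ q).comp (C (D : ℚ)⁻¹ * X + C (1 - (s : ℚ) / D))

section choosePoly

variable {q D : ℕ}

theorem eval_choosePoly (s : ℕ) (x : ℚ) :
    (choosePoly q D s).eval x = (q ! : ℚ)⁻¹ * (ascPochhammer ℚ q).eval ((x - s) / D + 1) := by
  simp only [choosePoly, eval_mul, eval_C, eval_comp, eval_add, eval_X]
  ring_nf

theorem choosePoly_eval_add_mul (hD : D ≠ 0) (s k : ℕ) :
    (choosePoly q D s).eval ((s + D * k : ℕ) : ℚ) = (k + q).choose q := by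
  have hx : ((s + D * k : ℕ) - s : ℚ) / D + 1 = ((k + 1 : ℕ) : ℚ) := by
    push_cast
    field_simp
    ring
  rw [eval_choosePoly, hx, ← ascPochhammer_eval_cast, ascPochhammer_nat_eq_ascFactorial,
    Nat.ascFactorial_eq_factorial_mul_choose, Nat.cast_mul, inv_mul_cancel_left₀ (by positivity)]

theorem choosePoly_eval_eq_zero (hD : D ≠ 0) {s n j : ℕ} (hs : n + D * (j + 1) = s)
    (hj : j < q) : (choosePoly q D s).eval (n : ℚ) = 0 := by
  have hx : ((n : ℚ) - s) / D + 1 = -(j : ℚ) := by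
    rw [← hs]
    push_cast
    field_simp
    ring
  rw [eval_choosePoly, hx, ascPochhammer_eval_neg_coe_nat_of_lt hj, mul_zero]

theorem natDegree_choosePoly_le (s : ℕ) : (choosePoly q D s).natDegree ≤ q := by
  refine (natDegree_C_mul_le _ _).trans <| natDegree_comp_le.trans ?_
  rw [ascPochhammer_natDegree]
  exact (Nat.mul_le_mul_left q natDegree_linear_le).trans_eq (mul_one q)

theorem coeff_choosePoly (hD : D ≠ 0) (s : ℕ) :
    (choosePoly q D s).coeff q = ((q ! : ℚ) * (D : ℚ) ^ q)⁻¹ := by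
  have hD' : (D : ℚ)⁻¹ ≠ 0 := by positivity
  have := coeff_comp_degree_mul_degree (p := ascPochhammer ℚ q)
    (q := C (D : ℚ)⁻¹ * X + C (1 - (s : ℚ) / D)) (by rw [natDegree_linear hD']; exact one_ne_zero)
  rw [ascPochhammer_natDegree, natDegree_linear hD', mul_one,
    (monic_ascPochhammer ℚ q).leadingCoeff, leadingCoeff_linear hD'] at this
  rw [choosePoly, coeff_C_mul, this, one_mul, mul_inv, inv_pow]

end choosePoly

section QuasiPolynomial

variable {ι : Type*} [Fintype ι] [DecidableEq ι] {q D : ℕ}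

theorem natCard_add_mul_sum_eq_ite (hq : Fintype.card ι = q + 1) (hD : D ≠ 0) {s : ℕ}
    (hs : s < (q + 1) * D) (n : ℕ) :
    (Nat.card {z : ι → ℕ // s + D * ∑ i, z i = n} : ℚ) =
      if s ≡ n [MOD D] then (choosePoly q D s).eval (n : ℚ) else 0 := by
  have hempty (h : ∀ k, s + D * k ≠ n) : Nat.card {z : ι → ℕ // s + D * ∑ i, z i = n} = 0 :=
    @Nat.card_of_isEmpty _ ⟨fun z ↦ h _ z.2⟩
  split_ifs with hsn
  · rcases le_or_gt s n with hle | hlt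
    · obtain ⟨k, hk⟩ := (Nat.modEq_iff_dvd' hle).1 hsn
      obtain rfl : n = s + D * k := by omega
      rw [choosePoly_eval_add_mul hD, ← natCard_sum_eq_choose hq k]
      exact congrArg Nat.cast <| Nat.card_congr <| Equiv.subtypeEquivRight fun z ↦ by
        rw [add_right_inj, mul_right_inj' hD]
    · obtain ⟨m, hm⟩ := (Nat.modEq_iff_dvd' hlt.le).1 hsn.symm
      obtain ⟨j, rfl⟩ : ∃ j, m = j + 1 := Nat.exists_eq_succ_of_ne_zero (by rintro rfl; omega)
      have hj : j + 1 < q + 1 := Nat.lt_of_mul_lt_mul_right (a := D) (by rw [mul_comm]; omega)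
      rw [hempty fun k hk ↦ by omega, Nat.cast_zero,
        choosePoly_eval_eq_zero hD (by omega) (Nat.lt_of_succ_lt_succ hj)]
  · rw [hempty fun k hk ↦ hsn (by rw [← hk, Nat.ModEq, Nat.add_mul_mod_self_left]), Nat.cast_zero]

noncomputable def residuePoly (a : ι → ℕ) (D q n : ℕ) : ℚ[X] :=
  ∑ y : ∀ i, Fin (D / a i) with ∑ i, a i * (y i : ℕ) ≡ n [MOD D],
    choosePoly q D (∑ i, a i * y i)

theorem residuePoly_add_right (a : ι → ℕ) (n : ℕ) :
    residuePoly a D q (n + D) = residuePoly a D q n := by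
  unfold residuePoly
  simp only [Nat.ModEq, Nat.add_mod_right]
  congr

theorem natDegree_residuePoly_le (a : ι → ℕ) (n : ℕ) : (residuePoly a D q n).natDegree ≤ q :=
  natDegree_sum_le_of_forall_le _ _ fun _ _ ↦ natDegree_choosePoly_le _

theorem natCard_eq_eval_residuePoly (hq : Fintype.card ι = q + 1) {a : ι → ℕ} (hD : D ≠ 0)
    (hDa : ∀ i, a i ∣ D) (n : ℕ) :
    (Nat.card {x : ι → ℕ // ∑ i, a i * x i = n} : ℚ) = (residuePoly a D q n).eval (n : ℚ) := by
  have : Nonempty ι := Fintype.card_pos_iff.1 (by omega)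
  rw [natCard_eq_sum_natCard_fiber hD hDa, Nat.cast_sum, residuePoly, eval_finsetSum, sum_filter]
  refine sum_congr rfl fun y _ ↦ natCard_add_mul_sum_eq_ite hq hD ?_ n
  exact hq ▸ sum_mul_lt_card_mul hDa y

theorem coeff_residuePoly_zero_ne_zero (a : ι → ℕ) (hD : D ≠ 0) (hDa : ∀ i, a i ∣ D) :
    (residuePoly a D q 0).coeff q ≠ 0 := by
  rw [residuePoly, finsetSum_coeff, sum_congr rfl fun y _ ↦ coeff_choosePoly hD _, sum_const,
    nsmul_eq_mul]
  let y₀ : ∀ i, Fin (D / a i) := fun i ↦ ⟨0, Nat.pos_of_ne_zero (Nat.div_ne_zero_of_dvd hD (hDa i))⟩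
  have hy₀ : y₀ ∈ univ.filter fun y : ∀ i, Fin (D / a i) ↦ ∑ i, a i * (y i : ℕ) ≡ 0 [MOD D] :=
    mem_filter.2 ⟨mem_univ _, by simp [y₀, Nat.ModEq]⟩
  exact mul_ne_zero (Nat.cast_ne_zero.2 (card_pos.2 ⟨y₀, hy₀⟩).ne') (by positivity)

end QuasiPolynomial

/-- `p_a(n)` is a quasi-polynomial of degree `r-1` with period `D`: there are
coefficient functions `c_0,…,c_{r-1} : ℕ → ℚ`, each periodic with period `D`,
with `p_a(n) = ∑ c_m(n) n^m`, and the leading coefficient `c_{r-1}` is not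
identically zero. -/
theorem stmt_1 (r : ℕ) (hr : 2 ≤ r) (a : Fin r → ℕ)
    (D : ℕ) (hD : 0 < D) (hDa : ∀ i, a i ∣ D) :
    ∃ c : Fin r → ℕ → ℚ,
      (∀ m : Fin r, ∀ n : ℕ, c m (n + D) = c m n) ∧
      (∀ n : ℕ, (Set.ncard {x : Fin r → ℕ | ∑ i, a i * x i = n} : ℚ)
          = ∑ m : Fin r, c m n * (n : ℚ) ^ (m : ℕ)) ∧
      (∃ n : ℕ, c ⟨r - 1, by omega⟩ n ≠ 0) := by
  have hq : Fintype.card (Fin r) = r - 1 + 1 := by rw [Fintype.card_fin]; omega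
  refine ⟨fun m n ↦ (residuePoly a D (r - 1) n).coeff m,
    fun m n ↦ by simp only [residuePoly_add_right], fun n ↦ ?_,
    0, coeff_residuePoly_zero_ne_zero a hD.ne' hDa⟩
  rw [← Nat.card_coe_set_eq, Set.coe_ofPred, natCard_eq_eval_residuePoly hq hD.ne' hDa,
    eval_eq_sum_range' ((natDegree_residuePoly_le a n).trans_lt (by omega : r - 1 < r))]
  exact (Fin.sum_univ_eq_sum_range
    (fun m ↦ (residuePoly a D (r - 1) n).coeff m * (n : ℚ) ^ m) r).symm
end

section
/- Let r ≥ 2, let a = (a_1,…,a_r) be a sequence of positive integers, and let d ≥ 2 be an integer. Then for all n ≥ 0, p_{a,d}(n) = ∑_{J ⊆ {1,…,r}} p_{da}(n − a_J), where da = (d·a_1, d·a_2, …, d·a_r), a_J = ∑_{i∈J} a_i, and any term with n − a_J < 0 is taken to be 0. -/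
private lemma ncard_biUnion_aux {α ι : Type*} [DecidableEq ι] (s : Finset ι) (f : ι → Set α)
    (hfin : ∀ i ∈ s, (f i).Finite)
    (hdisj : ∀ i ∈ s, ∀ j ∈ s, i ≠ j → Disjoint (f i) (f j)) :
    (⋃ i ∈ s, f i).ncard = ∑ i ∈ s, (f i).ncard := by
  classical
  induction s using Finset.induction_on with
  | empty => simp
  | @insert k t hns ih =>
    rw [Finset.sum_insert hns]
    have hU : (⋃ i ∈ insert k t, f i) = f k ∪ ⋃ i ∈ t, f i := by
      simp [Set.biUnion_insert]
    rw [hU]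
    have htfin : (⋃ i ∈ t, f i).Finite := by
      apply Set.Finite.biUnion t.finite_toSet
      intro i hi; exact hfin i (Finset.mem_insert_of_mem hi)
    have hdk : Disjoint (f k) (⋃ i ∈ t, f i) := by
      rw [Set.disjoint_iff_inter_eq_empty]
      ext x
      simp only [Set.mem_inter_iff, Set.mem_iUnion, Set.mem_empty_iff_false, iff_false, not_and]
      rintro hxk ⟨i, hi, hxi⟩
      have hne : k ≠ i := by rintro rfl; exact hns hi
      exact (hdisj k (Finset.mem_insert_self k t) i (Finset.mem_insert_of_mem hi) hne).ne_of_mem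
        hxk hxi rfl
    rw [Set.ncard_union_eq hdk (hfin k (Finset.mem_insert_self k t)) htfin,
      ih (fun i hi => hfin i (Finset.mem_insert_of_mem hi))
        (fun i hi j hj => hdisj i (Finset.mem_insert_of_mem hi) j (Finset.mem_insert_of_mem hj))]

/-- `p_{a,d}(n) = ∑_{J ⊆ [r]} p_{da}(n - a_J)`, where `da = (d a_1, …, d a_r)`,
`a_J = ∑_{i∈J} a_i`, and the restricted partition function is extended by `0`
on negative arguments (here realized by counting solutions in `ℤ`, which gives
the empty set when `n - a_J < 0`). -/
theorem stmt_3 (r : ℕ) (hr : 2 ≤ r) (a : Fin r → ℕ) (ha : ∀ i, 0 < a i)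
    (d : ℕ) (hd : 2 ≤ d) (n : ℕ) :
    Set.ncard {x : Fin r → ℕ |
        (∑ i, a i * x i = n) ∧ ∀ i, x i % d = 0 ∨ x i % d = 1}
      = ∑ J ∈ (Finset.univ : Finset (Fin r)).powerset,
          Set.ncard {x : Fin r → ℕ |
            ∑ i, ((d * a i : ℕ) : ℤ) * (x i : ℤ) = (n : ℤ) - ∑ i ∈ J, (a i : ℤ)} := by
  classical
  have hd0 : 0 < d := lt_of_lt_of_le two_pos hd
  -- indicator
  set ind : Finset (Fin r) → Fin r → ℕ := fun J i => if i ∈ J then 1 else 0 with hind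
  set S : Finset (Fin r) → Set (Fin r → ℕ) := fun J =>
    {x | (∑ i, a i * x i = n) ∧ ∀ i, x i % d = ind J i} with hS
  set T : Finset (Fin r) → Set (Fin r → ℕ) := fun J =>
    {x : Fin r → ℕ | ∑ i, ((d * a i : ℕ) : ℤ) * (x i : ℤ) = (n : ℤ) - ∑ i ∈ J, (a i : ℤ)}
    with hT
  -- T J is finite
  have hTfin : ∀ J, (T J).Finite := by
    intro J
    have hsub : T J ⊆ Set.pi Set.univ (fun _ : Fin r => Set.Iic n) := by
      intro x hx
      intro i _
      simp only [Set.mem_Iic]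
      have hx' : ∑ j, ((d * a j : ℕ) : ℤ) * (x j : ℤ) = (n : ℤ) - ∑ j ∈ J, (a j : ℤ) := hx
      have h1 : ((d * a i : ℕ) : ℤ) * (x i : ℤ) ≤ (n : ℤ) := by
        calc ((d * a i : ℕ) : ℤ) * (x i : ℤ)
            ≤ ∑ j, ((d * a j : ℕ) : ℤ) * (x j : ℤ) :=
              Finset.single_le_sum (f := fun j => ((d * a j : ℕ) : ℤ) * (x j : ℤ))
                (fun j _ => by positivity) (Finset.mem_univ i)
          _ = (n : ℤ) - ∑ j ∈ J, (a j : ℤ) := hx'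
          _ ≤ (n : ℤ) := by
              have : (0 : ℤ) ≤ ∑ j ∈ J, (a j : ℤ) :=
                Finset.sum_nonneg fun j _ => by positivity
              omega
      have h2 : (x i : ℤ) ≤ ((d * a i : ℕ) : ℤ) * (x i : ℤ) := by
        have : (1 : ℤ) ≤ ((d * a i : ℕ) : ℤ) := by
          have h3 : 1 ≤ d * a i := Nat.one_le_iff_ne_zero.mpr (Nat.mul_pos hd0 (ha i)).ne'
          exact_mod_cast h3
        nlinarith [Int.ofNat_nonneg (x i)]
      have : (x i : ℤ) ≤ (n : ℤ) := le_trans h2 h1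
      exact_mod_cast this
    exact Set.Finite.subset (Set.Finite.pi fun _ => Set.finite_Iic n) hsub
  -- S J = (fun y i => d * y i + ind J i) '' T J
  have himg : ∀ J, S J = (fun y : Fin r → ℕ => fun i => d * y i + ind J i) '' T J := by
    intro J
    ext x
    simp only [hS, hT, hind, Set.mem_setOf_eq, Set.mem_image]
    constructor
    · rintro ⟨hsum, hmod⟩
      refine ⟨fun i => x i / d, ?_, ?_⟩
      · -- integer equation
        have key : ∀ i, (a i : ℤ) * (x i : ℤ)
            = ((d * a i : ℕ) : ℤ) * ((x i / d : ℕ) : ℤ)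
              + (if i ∈ J then (a i : ℤ) else 0) := by
          intro i
          have h := Nat.div_add_mod (x i) d
          rw [hmod i] at h
          by_cases hi : i ∈ J <;> simp only [hi, if_true, if_false] at h ⊢
          · have hxi : (x i : ℤ) = (d : ℤ) * ((x i / d : ℕ) : ℤ) + 1 := by
              exact_mod_cast h.symm
            rw [hxi]; push_cast; ring
          · have hxi : (x i : ℤ) = (d : ℤ) * ((x i / d : ℕ) : ℤ) := by
              exact_mod_cast h.symm
            rw [hxi]; push_cast; ring
        have hcast : (n : ℤ) = ∑ i, (a i : ℤ) * (x i : ℤ) := by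
          exact_mod_cast hsum.symm
        rw [hcast]
        rw [Finset.sum_congr rfl (fun i _ => key i), Finset.sum_add_distrib,
          Finset.sum_ite_mem, Finset.univ_inter]
        ring
      · funext i
        have h := Nat.div_add_mod (x i) d
        rw [hmod i] at h
        by_cases hi : i ∈ J <;> simp only [hi, if_true, if_false] at h ⊢ <;> omega
    · rintro ⟨y, hy, rfl⟩
      constructor
      · have key : ∀ i, (a i : ℤ) * ((d * y i + ind J i : ℕ) : ℤ)
            = ((d * a i : ℕ) : ℤ) * (y i : ℤ) + (if i ∈ J then (a i : ℤ) else 0) := by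
          intro i
          simp only [hind]
          by_cases hi : i ∈ J <;> simp only [hi, if_true, if_false] <;> push_cast <;> ring
        have heq : (∑ i, (a i : ℤ) * ((d * y i + ind J i : ℕ) : ℤ)) = (n : ℤ) := by
          rw [Finset.sum_congr rfl (fun i _ => key i), Finset.sum_add_distrib,
            Finset.sum_ite_mem, Finset.univ_inter, hy]
          ring
        exact_mod_cast heq
      · intro i
        simp only [hind]
        split
        · simp [Nat.add_mul_mod_self_left, Nat.mod_eq_of_lt (lt_of_lt_of_le one_lt_two hd),
            Nat.mul_add_mod]
        · simp [Nat.mul_add_mod]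
  -- each set in RHS sum
  have hScard : ∀ J, (S J).ncard = (T J).ncard := by
    intro J
    rw [himg J]
    apply Set.ncard_image_of_injective
    intro y z hyz
    funext i
    have h := congrFun hyz i
    simp only at h
    have h2 := add_right_cancel h
    exact Nat.eq_of_mul_eq_mul_left hd0 h2
  -- LHS = union of S J
  have hLHS : {x : Fin r → ℕ |
      (∑ i, a i * x i = n) ∧ ∀ i, x i % d = 0 ∨ x i % d = 1}
      = ⋃ J ∈ (Finset.univ : Finset (Fin r)).powerset, S J := by
    ext x
    simp only [Set.mem_setOf_eq, Set.mem_iUnion, hS, hind]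
    constructor
    · rintro ⟨hsum, hmod⟩
      refine ⟨Finset.univ.filter (fun i => x i % d = 1), Finset.mem_powerset.mpr
        (Finset.subset_univ _), hsum, ?_⟩
      intro i
      simp only [Finset.mem_filter, Finset.mem_univ, true_and]
      rcases hmod i with h | h <;> simp [h]
    · rintro ⟨J, _, hsum, hmod⟩
      refine ⟨hsum, fun i => ?_⟩
      have h := hmod i
      by_cases hi : i ∈ J <;> simp [hi] at h <;> omega
  have hdisj : ∀ J ∈ (Finset.univ : Finset (Fin r)).powerset,
      ∀ K ∈ (Finset.univ : Finset (Fin r)).powerset, J ≠ K → Disjoint (S J) (S K) := by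
    intro J _ K _ hJK
    rw [Set.disjoint_iff_inter_eq_empty]
    ext x
    simp only [Set.mem_inter_iff, hS, Set.mem_setOf_eq, Set.mem_empty_iff_false, iff_false]
    rintro ⟨⟨-, hJ⟩, -, hK⟩
    apply hJK
    ext i
    have h1 := hJ i; have h2 := hK i
    simp only [hind] at h1 h2
    by_cases hiJ : i ∈ J <;> by_cases hiK : i ∈ K
    · simp [hiJ, hiK]
    · exfalso; simp [hiJ, hiK] at h1 h2; omega
    · exfalso; simp [hiJ, hiK] at h1 h2; omega
    · simp [hiJ, hiK]
  rw [hLHS, ncard_biUnion_aux _ _ (fun J _ => by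
      rw [himg J]; exact (hTfin J).image _) hdisj]
  exact Finset.sum_congr rfl fun J _ => hScard J
end

section
/- Let r ≥ 2, let a = (a_1,…,a_r) be a sequence of positive integers, let d ≥ 2 be an integer, and let D(d) be the least common multiple of d·a_1,…,d·a_r. Then for every n ≥ 0, as an equality of rational numbers, p_{a,d}(n) = (1/(r−1)!) · ∑_{ε ∈ {0,1}^r} ∑ ∏_{ℓ=1}^{r−1} ((n − ∑_{i=1}^r a_i(d·j_i + ε_i))/D(d) + ℓ), where the inner sum runs over all tuples (j_1,…,j_r) of integers with 0 ≤ j_i ≤ D(d)/(d·a_i) − 1 for each 1 ≤ i ≤ r and ∑_{i=1}^r a_i(d·j_i + ε_i) ≡ n (mod D(d)). -/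
/-!
Put `q_i = D / (d a_i)`. Every `x_i ≡ 0, 1 (mod d)` is uniquely `x_i = d (j_i + q_i k_i) + ε_i`
with `ε_i ∈ {0, 1}`, `j_i < q_i` and `k_i ≥ 0`, and then `∑ a_i x_i = S + D ∑ k_i` where
`S = ∑ a_i (d j_i + ε_i)`. So the solutions with given `(ε, j)` correspond to the `k ∈ ℕ^r` with
`∑ k_i = (n - S) / D`; by stars and bars there are `binom((n - S)/D + r - 1, r - 1)` of them,
which is the product in the formula divided by `(r - 1)!`. Since `S < r D`, when `S > n` the
quotient `(n - S) / D` is one of `-1, …, -(r - 1)`, so the product vanishes just as the count does.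
-/

open Finset
open scoped Nat

theorem ncard_sum_eq_choose (s m : ℕ) :
    {k : Fin (s + 1) → ℕ | ∑ i, k i = m}.ncard = (m + s).choose s := by
  rw [← Nat.card_coe_set_eq, Set.coe_ofPred,
    ← Nat.card_congr (Sym.equivNatSumOfFintype (Fin (s + 1)) m), Nat.card_eq_fintype_card,
    Sym.card_sym_eq_choose, Fintype.card_fin, show s + 1 + m - 1 = m + s by omega,
    Nat.choose_symm_add]

theorem prod_Icc_add_eq_factorial_mul_choose (m s : ℕ) :
    ∏ ℓ ∈ Icc 1 s, (m + ℓ) = s ! * (m + s).choose s := by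
  rw [← Nat.ascFactorial_eq_factorial_mul_choose, Nat.ascFactorial_eq_prod_range, range_eq_Ico,
    ← Ico_add_one_right_eq_Icc, ← zero_add 1, ← prod_Ico_add']
  exact prod_congr rfl fun _ _ => by ring

theorem prod_Icc_neg_add_eq_zero {R : Type*} [CommRing R] {t s : ℕ} (ht : t ∈ Icc 1 s) :
    ∏ ℓ ∈ Icc 1 s, (-(t : R) + ℓ) = 0 :=
  prod_eq_zero ht (neg_add_cancel _)

theorem mul_mul_add_lt_mul_mul {a d j e q : ℕ} (ha : 0 < a) (he : e < d) (hj : j < q) :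
    a * (d * j + e) < d * a * q :=
  calc a * (d * j + e) < a * (d * (j + 1)) := Nat.mul_lt_mul_of_pos_left (by lia) ha
    _ ≤ a * (d * q) := Nat.mul_le_mul_left _ (Nat.mul_le_mul_left _ hj)
    _ = d * a * q := by ring

theorem exists_mem_Icc_eq_add_mul_of_modEq {s S D n : ℕ} (hS : S < (s + 1) * D)
    (hc : S % D = n % D) (hn : n < S) : ∃ t ∈ Icc 1 s, S = n + D * t := by
  obtain ⟨t, ht⟩ := (Nat.modEq_iff_dvd' hn.le).mp hc.symm
  refine ⟨t, mem_Icc.mpr ⟨Nat.pos_of_ne_zero fun h => ?_, ?_⟩, by omega⟩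
  · simp only [h, mul_zero] at ht
    omega
  · have : D * t < D * (s + 1) := by rw [mul_comm D (s + 1)]; omega
    exact Nat.le_of_lt_succ (Nat.lt_of_mul_lt_mul_left this)

theorem factorial_mul_ncard_add_mul_sum_eq {s S D n : ℕ} (hD : 0 < D) (hS : S < (s + 1) * D) :
    (s ! : ℚ) * {k : Fin (s + 1) → ℕ | S + D * ∑ i, k i = n}.ncard =
      if S % D = n % D then ∏ ℓ ∈ Icc 1 s, (((n : ℚ) - S) / D + ℓ) else 0 := by
  by_cases hn : ∃ m, n = S + D * m
  · obtain ⟨m, rfl⟩ := hn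
    have hK : {k : Fin (s + 1) → ℕ | S + D * ∑ i, k i = S + D * m} = {k | ∑ i, k i = m} := by
      ext k
      simp [hD.ne']
    have hquot : ((S + D * m : ℕ) - (S : ℚ)) / D = m := by
      push_cast
      field_simp
      ring
    rw [if_pos (Nat.add_mul_mod_self_left _ _ _).symm, hK, ncard_sum_eq_choose, hquot]
    exact_mod_cast (prod_Icc_add_eq_factorial_mul_choose m s).symm
  · have hK : {k : Fin (s + 1) → ℕ | S + D * ∑ i, k i = n} = ∅ :=
      Set.eq_empty_of_forall_notMem fun k hk => hn ⟨_, hk.symm⟩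
    rw [hK, Set.ncard_empty, Nat.cast_zero, mul_zero]
    split_ifs with hc
    · have hlt : n < S := not_le.mp fun hle =>
        hn (((Nat.modEq_iff_dvd' hle).mp hc).imp fun m hm => by omega)
      obtain ⟨t, ht, rfl⟩ := exists_mem_Icc_eq_add_mul_of_modEq hS hc hlt
      have hquot : ((n : ℚ) - (n + D * t : ℕ)) / D = -(t : ℚ) := by
        push_cast
        field_simp
        ring
      rw [hquot, prod_Icc_neg_add_eq_zero ht]
    · rfl


section Digits

variable {r : ℕ} (d : ℕ) (q : Fin r → ℕ)

def splitDigits (x : Fin r → ℕ) : (Fin r → ℕ) × (Fin r → ℕ) :=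
  (fun i => x i % d, fun i => x i / d % q i)

def highDigits (x : Fin r → ℕ) : Fin r → ℕ := fun i => x i / d / q i

def joinDigits (ε j k : Fin r → ℕ) : Fin r → ℕ := fun i => d * (j i + q i * k i) + ε i

variable {d q}

theorem joinDigits_splitDigits (x : Fin r → ℕ) :
    joinDigits d q (splitDigits d q x).1 (splitDigits d q x).2 (highDigits d q x) = x := by
  funext i
  simp only [joinDigits, splitDigits, highDigits, Nat.mod_add_div, Nat.div_add_mod]

theorem joinDigits_div {ε j k : Fin r → ℕ} (hε : ∀ i, ε i < d) (i : Fin r) :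
    joinDigits d q ε j k i / d = j i + q i * k i := by
  rw [joinDigits, Nat.mul_add_div ((Nat.zero_le _).trans_lt (hε i)), Nat.div_eq_of_lt (hε i),
    add_zero]

theorem splitDigits_joinDigits {ε j : Fin r → ℕ} (hε : ∀ i, ε i < d) (hj : ∀ i, j i < q i)
    (k : Fin r → ℕ) : splitDigits d q (joinDigits d q ε j k) = (ε, j) := by
  refine Prod.ext (funext fun i => ?_) (funext fun i => ?_)
  · simp only [splitDigits, joinDigits, Nat.mul_add_mod, Nat.mod_eq_of_lt (hε i)]
  · simp only [splitDigits, joinDigits_div hε, Nat.add_mul_mod_self_left, Nat.mod_eq_of_lt (hj i)]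

theorem highDigits_joinDigits {ε j : Fin r → ℕ} (hε : ∀ i, ε i < d) (hj : ∀ i, j i < q i)
    (k : Fin r → ℕ) : highDigits d q (joinDigits d q ε j k) = k := by
  funext i
  simp only [highDigits, joinDigits_div hε, Nat.div_eq_of_lt (hj i), zero_add,
    Nat.add_mul_div_left _ _ ((Nat.zero_le _).trans_lt (hj i))]

theorem sum_mul_joinDigits (a : Fin r → ℕ) {D : ℕ} (hD : ∀ i, d * a i * q i = D)
    (ε j k : Fin r → ℕ) :
    ∑ i, a i * joinDigits d q ε j k i = ∑ i, a i * (d * j i + ε i) + D * ∑ i, k i := by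
  rw [mul_sum, ← sum_add_distrib]
  refine sum_congr rfl fun i _ => ?_
  rw [joinDigits, ← hD i]
  ring

theorem ncard_fiber_splitDigits (a : Fin r → ℕ) {D : ℕ} (hD : ∀ i, d * a i * q i = D) (n : ℕ)
    {ε j : Fin r → ℕ} (hε : ∀ i, ε i < d) (hj : ∀ i, j i < q i) :
    {x : Fin r → ℕ | ∑ i, a i * x i = n ∧ splitDigits d q x = (ε, j)}.ncard =
      {k : Fin r → ℕ | ∑ i, a i * (d * j i + ε i) + D * ∑ i, k i = n}.ncard := by
  have hfiber : {x : Fin r → ℕ | ∑ i, a i * x i = n ∧ splitDigits d q x = (ε, j)} =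
      joinDigits d q ε j '' {k | ∑ i, a i * (d * j i + ε i) + D * ∑ i, k i = n} := by
    ext x
    constructor
    · rintro ⟨hx, hsplit⟩
      have hjoin := joinDigits_splitDigits (d := d) (q := q) x
      rw [hsplit] at hjoin
      refine ⟨highDigits d q x, ?_, hjoin⟩
      rwa [Set.mem_ofPred_eq, ← sum_mul_joinDigits a hD, hjoin]
    · rintro ⟨k, hk, rfl⟩
      exact ⟨(sum_mul_joinDigits a hD ε j k).trans hk, splitDigits_joinDigits hε hj k⟩
  rw [hfiber, Set.ncard_image_of_injective _
    (Function.LeftInverse.injective (highDigits_joinDigits hε hj))]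

end Digits

theorem finite_setOf_sum_mul_eq {r : ℕ} (a : Fin r → ℕ) (ha : ∀ i, 0 < a i) (n : ℕ) :
    {x : Fin r → ℕ | ∑ i, a i * x i = n}.Finite := by
  refine (Set.Finite.pi fun _ => Set.finite_Iic n).subset fun x hx i _ => ?_
  calc x i ≤ a i * x i := Nat.le_mul_of_pos_left _ (ha i)
    _ ≤ ∑ i, a i * x i :=
      single_le_sum (f := fun i => a i * x i) (fun i _ => Nat.zero_le _) (mem_univ i)
    _ = n := hx

theorem ncard_eq_sum_ncard_fiber_splitDigits {r : ℕ} (a : Fin r → ℕ) (ha : ∀ i, 0 < a i)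
    (d : ℕ) {q : Fin r → ℕ} (hq : ∀ i, 0 < q i) (n : ℕ) :
    {x : Fin r → ℕ | ∑ i, a i * x i = n ∧ ∀ i, x i % d = 0 ∨ x i % d = 1}.ncard =
      ∑ ε ∈ Fintype.piFinset (fun _ : Fin r => ({0, 1} : Finset ℕ)),
        ∑ j ∈ Fintype.piFinset fun i : Fin r => range (q i),
          {x : Fin r → ℕ | ∑ i, a i * x i = n ∧ splitDigits d q x = (ε, j)}.ncard := by
  set X := {x : Fin r → ℕ | ∑ i, a i * x i = n ∧ ∀ i, x i % d = 0 ∨ x i % d = 1}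
  have hX : X.Finite := (finite_setOf_sum_mul_eq a ha n).subset fun _ hx => hx.1
  have hmaps : (hX.toFinset : Set (Fin r → ℕ)).MapsTo (splitDigits d q)
      ↑(Fintype.piFinset (fun _ : Fin r => ({0, 1} : Finset ℕ)) ×ˢ
        Fintype.piFinset fun i : Fin r => range (q i)) := by
    intro x hx
    simp only [Set.Finite.coe_toFinset] at hx
    simp only [splitDigits, mem_coe, mem_product, Fintype.mem_piFinset, mem_insert, mem_singleton,
      mem_range]
    exact ⟨hx.2, fun i => Nat.mod_lt _ (hq i)⟩
  rw [Set.ncard_eq_toFinset_card _ hX, card_eq_sum_card_fiberwise hmaps, sum_product]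
  refine sum_congr rfl fun ε hε => sum_congr rfl fun j _ => ?_
  rw [← Set.ncard_coe_finset]
  congr 1
  ext x
  simp only [coe_filter, Set.Finite.mem_toFinset, Set.mem_ofPred_eq, X]
  rw [Fintype.mem_piFinset] at hε
  constructor
  · rintro ⟨⟨hx, -⟩, hsplit⟩
    exact ⟨hx, hsplit⟩
  · rintro ⟨hx, hsplit⟩
    refine ⟨⟨hx, fun i => ?_⟩, hsplit⟩
    have hlow : x i % d = ε i := congrFun (congrArg Prod.fst hsplit) i
    simpa [hlow] using hε i

theorem factorial_mul_ncard_fiber_splitDigits {s : ℕ} (a : Fin (s + 1) → ℕ) (ha : ∀ i, 0 < a i)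
    {d D : ℕ} {q : Fin (s + 1) → ℕ} (hD : ∀ i, d * a i * q i = D) (n : ℕ)
    {ε j : Fin (s + 1) → ℕ} (hε : ∀ i, ε i < d) (hj : ∀ i, j i < q i) :
    (s ! : ℚ) * {x : Fin (s + 1) → ℕ | ∑ i, a i * x i = n ∧ splitDigits d q x = (ε, j)}.ncard =
      if (∑ i, a i * (d * j i + ε i)) % D = n % D then
        ∏ ℓ ∈ Icc 1 s, (((n : ℚ) - ∑ i, (a i : ℚ) * ((d : ℚ) * j i + ε i)) / D + ℓ)
      else 0 := by
  have hD0 : 0 < D :=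
    hD 0 ▸ Nat.mul_pos (Nat.mul_pos ((Nat.zero_le _).trans_lt (hε 0)) (ha 0))
      ((Nat.zero_le _).trans_lt (hj 0))
  have hS : ∑ i, a i * (d * j i + ε i) < (s + 1) * D :=
    calc _ < ∑ _i : Fin (s + 1), D := sum_lt_sum_of_nonempty univ_nonempty fun i _ =>
          hD i ▸ mul_mul_add_lt_mul_mul (ha i) (hε i) (hj i)
      _ = (s + 1) * D := by simp
  rw [ncard_fiber_splitDigits a hD n hε hj, factorial_mul_ncard_add_mul_sum_eq hD0 hS]
  push_cast
  rfl

/-- Formula for `p_{a,d}(n)`: with `D(d) = lcm(d a_1, …, d a_r)`,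
`p_{a,d}(n) = (1/(r-1)!) ∑_{ε ∈ {0,1}^r} ∑ ∏_{ℓ=1}^{r-1}
  ((n - ∑ a_i (d j_i + ε_i))/D(d) + ℓ)`,
the inner sum over `0 ≤ j_i ≤ D(d)/(d a_i) - 1` with
`∑ a_i (d j_i + ε_i) ≡ n (mod D(d))`. -/
theorem stmt_4 (r : ℕ) (hr : 2 ≤ r) (a : Fin r → ℕ) (ha : ∀ i, 0 < a i)
    (d : ℕ) (hd : 2 ≤ d) (D : ℕ)
    (hD : D = Finset.univ.lcm (fun i : Fin r => d * a i)) (n : ℕ) :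
    (Set.ncard {x : Fin r → ℕ |
        (∑ i, a i * x i = n) ∧ ∀ i, x i % d = 0 ∨ x i % d = 1} : ℚ) =
      (1 / (Nat.factorial (r - 1) : ℚ)) *
        ∑ ε ∈ Fintype.piFinset (fun _ : Fin r => ({0, 1} : Finset ℕ)),
          ∑ j ∈ (Fintype.piFinset fun i : Fin r => Finset.range (D / (d * a i))).filter
              (fun j => (∑ i, a i * (d * j i + ε i)) % D = n % D),
            ∏ ℓ ∈ Finset.Icc 1 (r - 1),
              (((n : ℚ) - ∑ i, (a i : ℚ) * ((d : ℚ) * j i + ε i)) / (D : ℚ) + (ℓ : ℚ)) := by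
  obtain ⟨s, rfl⟩ : ∃ s, r = s + 1 := ⟨r - 1, by omega⟩
  have hdvd (i : Fin (s + 1)) : d * a i ∣ D := hD ▸ dvd_lcm (mem_univ i)
  have hDq (i : Fin (s + 1)) : d * a i * (D / (d * a i)) = D := Nat.mul_div_cancel' (hdvd i)
  have hD0 : 0 < D := by
    rw [hD, Nat.pos_iff_ne_zero, Ne, Finset.lcm_eq_zero_iff]
    rintro ⟨i, -, hi⟩
    exact (Nat.mul_pos (by omega) (ha i)).ne' hi
  have hq (i : Fin (s + 1)) : 0 < D / (d * a i) :=
    Nat.div_pos (Nat.le_of_dvd hD0 (hdvd i)) (Nat.mul_pos (by omega) (ha i))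
  rw [ncard_eq_sum_ncard_fiber_splitDigits a ha d hq n, Nat.add_sub_cancel, mul_sum]
  push_cast
  refine sum_congr rfl fun ε hε => ?_
  rw [sum_filter, mul_sum]
  refine sum_congr rfl fun j hj => ?_
  have hεd (i : Fin (s + 1)) : ε i < d := by
    have := Fintype.mem_piFinset.mp hε i
    simp only [mem_insert, mem_singleton] at this
    omega
  have hjq (i : Fin (s + 1)) : j i < D / (d * a i) := mem_range.mp (Fintype.mem_piFinset.mp hj i)
  rw [← factorial_mul_ncard_fiber_splitDigits a ha hDq n hεd hjq]
  field_simp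
end

section
/- Let d ≥ 2 and n ≥ 1 be integers, let 1 ≤ k ≤ ⌊log_d(n)⌋, and let 𝐝 = (1, d, d^2, …, d^k). Then, as an equality of rational numbers, p_{𝐝,d}(n) = (1/k!) · ∑ ∏_{ℓ=1}^{k} ((n − ∑_{i=0}^{k−1} d^{i+1} j_i − ∑_{i=0}^{k} d^i ε_i)/d^{k+1} + ℓ), where the sum runs over all ε = (ε_0,…,ε_k) ∈ {0,1}^{k+1} and all tuples (j_0,…,j_{k−1}) of integers with 0 ≤ j_i ≤ d^{k−i} − 1 for 0 ≤ i ≤ k−1 such that ∑_{i=0}^{k−1} d^{i+1} j_i + ∑_{i=0}^{k} d^i ε_i ≡ n (mod d^{k+1}). -/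
/-!
Write each `x i = ε i + d * (j i + d ^ (k - i) * z i)` with `ε i = x i % d ∈ {0, 1}`,
`j i < d ^ (k - i)` (and `j k = 0`) and `z i ≥ 0`. Then `∑ d ^ i * x i = L + d ^ (k + 1) * ∑ z i`
with `L = ∑ d ^ (i + 1) * j i + ∑ d ^ i * ε i`, so for fixed `(ε, j)` the solutions are the
compositions of `M = (n - L) / d ^ (k + 1)` into `k + 1` parts, of which there are
`(M + k).choose k = (1 / k!) ∏_{ℓ=1}^k (M + ℓ)`. The formula also sums over the `(ε, j)` with
`L ≡ n` but `L > n`; since `L < (k + 1) d ^ (k + 1)`, for these `(n - L) / d ^ (k + 1)` is one of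
`-1, …, -k`, so the product vanishes.
-/

open Finset
open scoped Nat

lemma card_antidiagonalTuple_succ (k M : ℕ) :
    #(Nat.antidiagonalTuple (k + 1) M) = (M + k).choose k := by
  classical
  rw [← piAntidiag_univ_fin_eq_antidiagonalTuple, ← map_sym_eq_piAntidiag, card_map, sym_univ,
    Finset.card_univ, Sym.card_sym_eq_choose, Fintype.card_fin, show k + 1 + M - 1 = M + k by omega,
    Nat.choose_symm_add]

lemma prod_Icc_natCast_add {R : Type*} [CommSemiring R] (m k : ℕ) :
    ∏ ℓ ∈ Icc 1 k, ((m : R) + ℓ) = k ! * (m + k).choose k := by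
  rw [← Nat.cast_mul, ← Nat.ascFactorial_eq_factorial_mul_choose, Nat.ascFactorial_eq_prod_range,
    Nat.cast_prod, range_eq_Ico, ← Ico_add_one_right_eq_Icc, ← prod_Ico_add' _ 0 k 1]
  push_cast
  exact prod_congr rfl fun i _ => by ring

lemma inv_factorial_mul_prod_Icc_sub_div_add {k D n S : ℕ} (hD : 0 < D) (hmod : S ≡ n [MOD D])
    (hS : S < (k + 1) * D) :
    (1 / k ! : ℚ) * ∏ ℓ ∈ Icc 1 k, (((n : ℚ) - S) / D + ℓ) =
      if S ≤ n then (((n - S) / D + k).choose k : ℚ) else 0 := by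
  have hDq : (D : ℚ) ≠ 0 := by positivity
  split_ifs with hle
  · obtain ⟨M, hM⟩ : D ∣ n - S := (Nat.modEq_iff_dvd' hle).1 hmod
    have hdiv : ((n : ℚ) - S) / D = M := by
      rw [div_eq_iff hDq, ← Nat.cast_sub hle, hM]; push_cast; ring
    rw [hdiv, hM, Nat.mul_div_cancel_left _ hD, prod_Icc_natCast_add]
    field_simp
  · obtain ⟨t, ht⟩ : D ∣ S - n := (Nat.modEq_iff_dvd' (by omega)).1 hmod.symm
    have hdiv : ((n : ℚ) - S) / D = -t := by
      have hS' : (S : ℚ) = n + D * t := by exact_mod_cast (by omega : S = n + D * t)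
      rw [div_eq_iff hDq, hS']
      ring
    have ht1 : 1 ≤ t := Nat.pos_of_ne_zero fun h => by rw [h, mul_zero] at ht; omega
    have htk : t ≤ k := by
      have : D * t < D * (k + 1) := by rw [← ht, mul_comm]; omega
      exact Nat.lt_succ_iff.1 (Nat.lt_of_mul_lt_mul_left this)
    rw [hdiv, prod_eq_zero (mem_Icc.2 ⟨ht1, htk⟩) (by ring), mul_zero]

lemma add_mul_add_mul_mod_div {b c e j z : ℕ} (he : e < b) (hj : j < c) :
    (e + b * (j + c * z)) % b = e ∧ (e + b * (j + c * z)) / b % c = j ∧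
      (e + b * (j + c * z)) / b / c = z := by
  have hb : 0 < b := by omega
  have hc : 0 < c := by omega
  simp only [Nat.add_mul_mod_self_left, Nat.add_mul_div_left _ _ hb, Nat.mod_eq_of_lt he,
    Nat.div_eq_of_lt he, Nat.add_mul_div_left _ _ hc, Nat.mod_eq_of_lt hj, Nat.div_eq_of_lt hj,
    zero_add, and_self]

lemma add_mul_eq_iff_mod_eq_and_le {L D s n : ℕ} (hD : 0 < D) :
    L + D * s = n ↔ L % D = n % D ∧ L ≤ n ∧ s = (n - L) / D := by
  constructor
  · rintro rfl
    simp [Nat.add_mul_mod_self_left, Nat.mul_div_cancel_left _ hD]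
  · rintro ⟨hmod, hle, rfl⟩
    obtain ⟨c, hc⟩ := (Nat.modEq_iff_dvd' hle).1 hmod
    rw [hc, Nat.mul_div_cancel_left _ hD]
    omega

lemma mem_piFinset_zero_one {ι : Type*} [Fintype ι] [DecidableEq ι] {ε : ι → ℕ} :
    ε ∈ Fintype.piFinset (fun _ => ({0, 1} : Finset ℕ)) ↔ ∀ i, ε i ≤ 1 := by
  simp only [Fintype.mem_piFinset, mem_insert, mem_singleton]
  exact forall_congr' fun i => by omega

section Digits

variable {d k : ℕ}

def tupleOfDigits (d k : ℕ) (ε : Fin (k + 1) → ℕ) (j : Fin k → ℕ) (z : Fin (k + 1) → ℕ) :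
    Fin (k + 1) → ℕ :=
  fun i => ε i + d * (Fin.snoc (α := fun _ => ℕ) j 0 i + d ^ (k - i) * z i)

def lowPart (d k : ℕ) (ε : Fin (k + 1) → ℕ) (j : Fin k → ℕ) : ℕ :=
  ∑ i : Fin k, d ^ ((i : ℕ) + 1) * j i + ∑ i : Fin (k + 1), d ^ (i : ℕ) * ε i

lemma sum_pow_mul_tupleOfDigits (ε : Fin (k + 1) → ℕ) (j : Fin k → ℕ) (z : Fin (k + 1) → ℕ) :
    ∑ i : Fin (k + 1), d ^ (i : ℕ) * tupleOfDigits d k ε j z i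
      = lowPart d k ε j + d ^ (k + 1) * ∑ i, z i := by
  have hterm (i : Fin (k + 1)) : d ^ (i : ℕ) * tupleOfDigits d k ε j z i
      = d ^ ((i : ℕ) + 1) * Fin.snoc (α := fun _ => ℕ) j 0 i + d ^ (i : ℕ) * ε i
        + d ^ (k + 1) * z i := by
    have : d ^ (k + 1) = d ^ (i : ℕ) * d * d ^ (k - i) := by
      rw [← pow_succ, ← pow_add]; congr 1; omega
    rw [this, tupleOfDigits, pow_succ]; ring
  have hsnoc : ∑ i : Fin (k + 1), d ^ ((i : ℕ) + 1) * Fin.snoc (α := fun _ => ℕ) j 0 i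
      = ∑ i : Fin k, d ^ ((i : ℕ) + 1) * j i := by
    simp [Fin.sum_univ_castSucc]
  rw [sum_congr rfl fun i _ => hterm i, sum_add_distrib, sum_add_distrib, hsnoc, ← mul_sum, lowPart]

lemma tupleOfDigits_digits (x : Fin (k + 1) → ℕ) :
    tupleOfDigits d k (fun i => x i % d) (fun i => x i.castSucc / d % d ^ (k - i))
      (fun i => x i / d / d ^ (k - i)) = x := by
  funext i
  induction i using Fin.lastCases with
  | last => simp [tupleOfDigits, Nat.mod_add_div]
  | cast i => simp [tupleOfDigits, Nat.mod_add_div]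

lemma snoc_lt_pow {j : Fin k → ℕ} (hj : ∀ i : Fin k, j i < d ^ (k - i))
    (i : Fin (k + 1)) : Fin.snoc (α := fun _ => ℕ) j 0 i < d ^ (k - i) := by
  induction i using Fin.lastCases with
  | last => simp
  | cast i => simpa using hj i

lemma tupleOfDigits_inj {ε ε' : Fin (k + 1) → ℕ} {j j' : Fin k → ℕ} {z z' : Fin (k + 1) → ℕ}
    (hε : ∀ i, ε i < d) (hε' : ∀ i, ε' i < d) (hj : ∀ i : Fin k, j i < d ^ (k - i))
    (hj' : ∀ i : Fin k, j' i < d ^ (k - i))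
    (h : tupleOfDigits d k ε j z = tupleOfDigits d k ε' j' z') :
    ε = ε' ∧ j = j' ∧ z = z' := by
  have hdigits (i : Fin (k + 1)) : ε i = ε' i ∧
      Fin.snoc (α := fun _ => ℕ) j 0 i = Fin.snoc (α := fun _ => ℕ) j' 0 i ∧ z i = z' i := by
    obtain ⟨h₁, h₂, h₃⟩ := add_mul_add_mul_mod_div (hε i) (snoc_lt_pow hj i) (z := z i)
    obtain ⟨h₁', h₂', h₃'⟩ := add_mul_add_mul_mod_div (hε' i) (snoc_lt_pow hj' i) (z := z' i)
    have hi := congrFun h i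
    simp only [tupleOfDigits] at hi
    rw [hi] at h₁ h₂ h₃
    exact ⟨h₁.symm.trans h₁', h₂.symm.trans h₂', h₃.symm.trans h₃'⟩
  refine ⟨funext fun i => (hdigits i).1, funext fun i => ?_, funext fun i => (hdigits i).2.2⟩
  simpa using (hdigits i.castSucc).2.1

lemma tupleOfDigits_solves_iff (hd : 2 ≤ d) {ε : Fin (k + 1) → ℕ} (hε : ∀ i, ε i ≤ 1)
    (j : Fin k → ℕ) (z : Fin (k + 1) → ℕ) (n : ℕ) :
    ((∑ i : Fin (k + 1), d ^ (i : ℕ) * tupleOfDigits d k ε j z i = n) ∧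
        ∀ i, tupleOfDigits d k ε j z i % d = 0 ∨ tupleOfDigits d k ε j z i % d = 1) ↔
      lowPart d k ε j % d ^ (k + 1) = n % d ^ (k + 1) ∧ lowPart d k ε j ≤ n ∧
        ∑ i, z i = (n - lowPart d k ε j) / d ^ (k + 1) := by
  have hmod (i : Fin (k + 1)) : tupleOfDigits d k ε j z i % d = ε i := by
    rw [tupleOfDigits, Nat.add_mul_mod_self_left, Nat.mod_eq_of_lt (by linarith [hε i])]
  simp only [hmod, sum_pow_mul_tupleOfDigits,
    add_mul_eq_iff_mod_eq_and_le (by positivity : 0 < d ^ (k + 1))]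
  exact and_iff_left fun i => by have := hε i; omega

lemma lowPart_lt (hd : 2 ≤ d) {ε : Fin (k + 1) → ℕ} (hε : ∀ i, ε i ≤ 1) {j : Fin k → ℕ}
    (hj : ∀ i : Fin k, j i < d ^ (k - i)) : lowPart d k ε j < (k + 1) * d ^ (k + 1) := by
  have hJ : ∑ i : Fin k, d ^ ((i : ℕ) + 1) * j i ≤ k * d ^ (k + 1) := by
    simpa using sum_le_card_nsmul (univ : Finset (Fin k)) _ (d ^ (k + 1)) fun i _ => calc
      d ^ ((i : ℕ) + 1) * j i ≤ d ^ ((i : ℕ) + 1) * d ^ (k - i) := Nat.mul_le_mul_left _ (hj i).le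
      _ = d ^ (k + 1) := by rw [← pow_add]; congr 1; omega
  have hE : ∑ i : Fin (k + 1), d ^ (i : ℕ) * ε i < d ^ (k + 1) := calc
    _ ≤ ∑ i : Fin (k + 1), d ^ (i : ℕ) :=
      sum_le_sum fun i _ => by simpa using Nat.mul_le_mul_left (d ^ (i : ℕ)) (hε i)
    _ = ∑ i ∈ range (k + 1), d ^ i := Fin.sum_univ_eq_sum_range (d ^ ·) _
    _ < d ^ (k + 1) := Nat.geomSum_lt hd (by simp)
  rw [lowPart, Nat.add_one_mul]
  omega

def digitTriples (d k n : ℕ) :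
    Finset (Σ _ : (Σ _ : Fin (k + 1) → ℕ, Fin k → ℕ), Fin (k + 1) → ℕ) :=
  ((Fintype.piFinset fun _ => {0, 1}).sigma fun ε =>
      (Fintype.piFinset fun i : Fin k => range (d ^ (k - i))).filter fun j =>
        lowPart d k ε j % d ^ (k + 1) = n % d ^ (k + 1) ∧ lowPart d k ε j ≤ n).sigma
    fun p => Nat.antidiagonalTuple (k + 1) ((n - lowPart d k p.1 p.2) / d ^ (k + 1))

lemma mem_digitTriples {n : ℕ} {ε : Fin (k + 1) → ℕ} {j : Fin k → ℕ} {z : Fin (k + 1) → ℕ} :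
    ⟨⟨ε, j⟩, z⟩ ∈ digitTriples d k n ↔ (∀ i, ε i ≤ 1) ∧ (∀ i : Fin k, j i < d ^ (k - i)) ∧
      lowPart d k ε j % d ^ (k + 1) = n % d ^ (k + 1) ∧ lowPart d k ε j ≤ n ∧
        ∑ i, z i = (n - lowPart d k ε j) / d ^ (k + 1) := by
  rw [digitTriples, mem_sigma, mem_sigma, mem_piFinset_zero_one]
  simp only [mem_filter, Fintype.mem_piFinset, mem_range, Nat.mem_antidiagonalTuple, and_assoc]

lemma card_digitTriples (n : ℕ) :
    #(digitTriples d k n) =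
      ∑ ε ∈ Fintype.piFinset (fun _ : Fin (k + 1) => ({0, 1} : Finset ℕ)),
        ∑ j ∈ (Fintype.piFinset fun i : Fin k => range (d ^ (k - (i : ℕ)))).filter
            (fun j => lowPart d k ε j % d ^ (k + 1) = n % d ^ (k + 1)),
          if lowPart d k ε j ≤ n then ((n - lowPart d k ε j) / d ^ (k + 1) + k).choose k
          else 0 := by
  rw [digitTriples, card_sigma, sum_sigma]
  refine sum_congr rfl fun ε _ => ?_
  simp only [← filter_filter, sum_filter, card_antidiagonalTuple_succ]

lemma ncard_solutions_eq_card_digitTriples (hd : 2 ≤ d) (n : ℕ) :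
    {x : Fin (k + 1) → ℕ | (∑ i : Fin (k + 1), d ^ (i : ℕ) * x i = n) ∧
        ∀ i, x i % d = 0 ∨ x i % d = 1}.ncard = #(digitTriples d k n) := by
  rw [← Set.ncard_coe_finset]
  refine (Set.ncard_congr (fun a _ => tupleOfDigits d k a.1.1 a.1.2 a.2) ?_ ?_ ?_).symm
  · rintro ⟨⟨ε, j⟩, z⟩ ha
    obtain ⟨hε, -, hmod, hle, hz⟩ := mem_digitTriples.1 ha
    exact (tupleOfDigits_solves_iff hd hε j z n).2 ⟨hmod, hle, hz⟩
  · rintro ⟨⟨ε, j⟩, z⟩ ⟨⟨ε', j'⟩, z'⟩ ha ha' h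
    obtain ⟨hε, hj, -⟩ := mem_digitTriples.1 ha
    obtain ⟨hε', hj', -⟩ := mem_digitTriples.1 ha'
    obtain ⟨rfl, rfl, rfl⟩ := tupleOfDigits_inj (fun i => (hε i).trans_lt hd)
      (fun i => (hε' i).trans_lt hd) hj hj' h
    rfl
  · intro x hx
    set ε : Fin (k + 1) → ℕ := fun i => x i % d
    set j : Fin k → ℕ := fun i => x i.castSucc / d % d ^ (k - i)
    set z : Fin (k + 1) → ℕ := fun i => x i / d / d ^ (k - i)
    have hε : ∀ i, ε i ≤ 1 := fun i => by rcases hx.2 i with h | h <;> simp [ε, h]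
    have hj : ∀ i : Fin k, j i < d ^ (k - i) := fun i => Nat.mod_lt _ (by positivity)
    obtain ⟨hmod, hle, hz⟩ :=
      (tupleOfDigits_solves_iff hd hε j z n).1 (tupleOfDigits_digits x ▸ hx)
    exact ⟨⟨⟨ε, j⟩, z⟩, mem_digitTriples.2 ⟨hε, hj, hmod, hle, hz⟩, tupleOfDigits_digits x⟩

end Digits

theorem stmt_5_general (d n k : ℕ) (hd : 2 ≤ d) :
    (Set.ncard {x : Fin (k + 1) → ℕ |
        (∑ i : Fin (k + 1), d ^ (i : ℕ) * x i = n) ∧ ∀ i, x i % d = 0 ∨ x i % d = 1} : ℚ) =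
      (1 / (Nat.factorial k : ℚ)) *
        ∑ ε ∈ Fintype.piFinset (fun _ : Fin (k + 1) => ({0, 1} : Finset ℕ)),
          ∑ j ∈ (Fintype.piFinset fun i : Fin k => Finset.range (d ^ (k - (i : ℕ)))).filter
              (fun j => (∑ i : Fin k, d ^ ((i : ℕ) + 1) * j i
                  + ∑ i : Fin (k + 1), d ^ (i : ℕ) * ε i) % d ^ (k + 1) = n % d ^ (k + 1)),
            ∏ ℓ ∈ Finset.Icc 1 k,
              (((n : ℚ) - ∑ i : Fin k, (d : ℚ) ^ ((i : ℕ) + 1) * j i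
                  - ∑ i : Fin (k + 1), (d : ℚ) ^ (i : ℕ) * ε i) / (d : ℚ) ^ (k + 1)
                + (ℓ : ℚ)) := by
  rw [ncard_solutions_eq_card_digitTriples hd n, card_digitTriples, Nat.cast_sum, mul_sum]
  refine sum_congr rfl fun ε hε => ?_
  rw [Nat.cast_sum, mul_sum]
  refine sum_congr rfl fun j hjmod => ?_
  obtain ⟨hj, hmod⟩ := mem_filter.1 hjmod
  have hL : ((lowPart d k ε j : ℕ) : ℚ) = ∑ i : Fin k, (d : ℚ) ^ ((i : ℕ) + 1) * j i
      + ∑ i : Fin (k + 1), (d : ℚ) ^ (i : ℕ) * ε i := by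
    push_cast [lowPart]; rfl
  rw [sub_sub, ← hL, ← Nat.cast_pow,
    inv_factorial_mul_prod_Icc_sub_div_add (S := lowPart d k ε j) (by positivity) hmod
      (lowPart_lt hd (mem_piFinset_zero_one.1 hε) (by simpa using hj)), Nat.cast_ite,
    Nat.cast_zero]

/-- Formula for `p_{𝐝,d}(n)` where `𝐝 = (1, d, …, d^k)` and
`1 ≤ k ≤ ⌊log_d n⌋`:
`p_{𝐝,d}(n) = (1/k!) ∑ ∏_{ℓ=1}^{k}
  ((n - ∑_{i=0}^{k-1} d^{i+1} j_i - ∑_{i=0}^{k} d^i ε_i)/d^{k+1} + ℓ)`,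
the sum over `ε ∈ {0,1}^{k+1}` and `0 ≤ j_i ≤ d^{k-i} - 1` with
`∑ d^{i+1} j_i + ∑ d^i ε_i ≡ n (mod d^{k+1})`. -/
theorem stmt_5 (d n k : ℕ) (hd : 2 ≤ d) (hn : 1 ≤ n)
    (hk1 : 1 ≤ k) (hk2 : k ≤ Nat.log d n) :
    (Set.ncard {x : Fin (k + 1) → ℕ |
        (∑ i : Fin (k + 1), d ^ (i : ℕ) * x i = n) ∧ ∀ i, x i % d = 0 ∨ x i % d = 1} : ℚ) =
      (1 / (Nat.factorial k : ℚ)) *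
        ∑ ε ∈ Fintype.piFinset (fun _ : Fin (k + 1) => ({0, 1} : Finset ℕ)),
          ∑ j ∈ (Fintype.piFinset fun i : Fin k => Finset.range (d ^ (k - (i : ℕ)))).filter
              (fun j => (∑ i : Fin k, d ^ ((i : ℕ) + 1) * j i
                  + ∑ i : Fin (k + 1), d ^ (i : ℕ) * ε i) % d ^ (k + 1) = n % d ^ (k + 1)),
            ∏ ℓ ∈ Finset.Icc 1 k,
              (((n : ℚ) - ∑ i : Fin k, (d : ℚ) ^ ((i : ℕ) + 1) * j i
                  - ∑ i : Fin (k + 1), (d : ℚ) ^ (i : ℕ) * ε i) / (d : ℚ) ^ (k + 1)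
                + (ℓ : ℚ)) :=
  stmt_5_general d n k hd
end

section
/- Let p ≥ 2 and n ≥ 1 be integers with k = ⌊log_p n⌋ ≥ 1. Then the cardinality |A_{p,n}| equals, as a rational number, (1/k!) · ∑ ∏_{ℓ=1}^{k} ((n − ∑_{i=0}^{k−1} p^{i+1} j_i − ∑_{i=0}^{k} p^i ε_i)/p^{k+1} + ℓ), where the sum runs over all ε = (ε_0,…,ε_k) ∈ {0,1}^{k+1} and all tuples (j_0,…,j_{k−1}) of integers with 0 ≤ j_i ≤ p^{k−i} − 1 for 0 ≤ i ≤ k−1 such that ∑_{i=0}^{k−1} p^{i+1} j_i + ∑_{i=0}^{k} p^i ε_i ≡ n (mod p^{k+1}). (When p is a prime, |A_{p,n}| equals the total stable cohomology dimension h_st(−n,n) of the line bundle O(−n,n) on the flag variety in characteristic p.) -/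
/-!
Write each `a_i = ε_i + p t_i + p ^ (k + 1 - i) s_i` with `ε_i ∈ {0, 1}`, `t_i < p ^ (k - i)`
(so `t_k = 0`) and `s_i ≥ 0`. Then `∑ a_i p ^ i = S + p ^ (k + 1) ∑ s_i` with
`S = ∑ p ^ (i + 1) t_i + ∑ p ^ i ε_i`, so over a fixed `(ε, t)` the tuples `s` are the weak
compositions of `m = (n - S) / p ^ (k + 1)` into `k + 1` parts, and there are
`C(m + k, k) = (1 / k!) ∏_{ℓ = 1}^{k} (m + ℓ)` of them. When `S > n` the fibre is empty, and the
bound `S < (k + 1) p ^ (k + 1)` makes `(n - S) / p ^ (k + 1)` one of `-1, …, -k`, where the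
product vanishes as well.
-/

open Finset

namespace StableCohomologyCount

theorem natCard_sum_eq_choose {ι : Type*} [Fintype ι] (m : ℕ) :
    Nat.card {s : ι → ℕ // ∑ i, s i = m} = (Fintype.card ι + m - 1).choose m := by
  classical
  rw [← Nat.card_congr (Sym.equivNatSumOfFintype ι m), Nat.card_eq_fintype_card,
    Sym.card_sym_eq_choose]

theorem prod_Icc_natCast_add_eq_factorial_mul_choose (m k : ℕ) :
    ∏ ℓ ∈ Icc 1 k, ((m : ℚ) + ℓ) = k.factorial * (m + k).choose k := by
  have h := Nat.ascFactorial_eq_factorial_mul_choose m k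
  rw [Nat.ascFactorial_eq_prod_range, range_eq_Ico] at h
  rw [← Ico_add_one_right_eq_Icc, ← prod_Ico_add' _ 0 k 1]
  exact_mod_cast (by rw [← h]; exact prod_congr rfl fun i _ => by ring :
    ∏ i ∈ Ico 0 k, (m + (i + 1)) = _)

section Fiber

variable {ι : Type*} [Fintype ι] {S N n : ℕ}

theorem finite_add_mul_sum_eq (hN : 0 < N) :
    Finite {s : ι → ℕ // S + N * ∑ i, s i = n} := by
  classical
  refine Set.Finite.to_subtype ((Set.finite_Iic fun _ => n).subset fun s hs i => ?_)
  have := single_le_sum (fun j _ => Nat.zero_le (s j)) (mem_univ i)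
  have := Nat.le_mul_of_pos_left (∑ j, s j) hN
  have hs : S + N * ∑ j, s j = n := hs
  show s i ≤ n
  omega

theorem natCard_add_mul_sum_eq_choose (hN : 0 < N) {m : ℕ} (hm : S + N * m = n) :
    Nat.card {s : ι → ℕ // S + N * ∑ i, s i = n} = (Fintype.card ι + m - 1).choose m := by
  rw [← natCard_sum_eq_choose]
  refine Nat.card_congr (Equiv.subtypeEquivRight fun s => ?_)
  rw [← hm, Nat.add_left_cancel_iff, Nat.mul_left_cancel_iff hN]

theorem natCard_add_mul_sum_eq_of_lt (h : n < S) :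
    Nat.card {s : ι → ℕ // S + N * ∑ i, s i = n} = 0 :=
  have : IsEmpty {s : ι → ℕ // S + N * ∑ i, s i = n} := ⟨fun s => by omega⟩
  Nat.card_of_isEmpty

theorem natCard_add_mul_sum_eq_of_mod_ne (h : S % N ≠ n % N) :
    Nat.card {s : ι → ℕ // S + N * ∑ i, s i = n} = 0 :=
  have : IsEmpty {s : ι → ℕ // S + N * ∑ i, s i = n} :=
    ⟨fun s => h (by rw [← s.2, Nat.add_mul_mod_self_left])⟩
  Nat.card_of_isEmpty

theorem prod_Icc_div_add_eq_factorial_mul_natCard {k : ℕ} (hN : 0 < N) (hS : S < (k + 1) * N)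
    (h : S % N = n % N) :
    ∏ ℓ ∈ Icc 1 k, (((n : ℚ) - S) / N + ℓ)
      = k.factorial * Nat.card {s : Fin (k + 1) → ℕ // S + N * ∑ i, s i = n} := by
  have hNq : (N : ℚ) ≠ 0 := by positivity
  rcases le_or_gt S n with hle | hlt
  · obtain ⟨m, hm⟩ : N ∣ n - S := (Nat.modEq_iff_dvd' hle).mp h
    have hn : S + N * m = n := by omega
    have hq : ((n : ℚ) - S) / N = m := by rw [← hn]; push_cast; field_simp; ring
    rw [natCard_add_mul_sum_eq_choose hN hn, Fintype.card_fin, show k + 1 + m - 1 = m + k by omega,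
      Nat.choose_symm_add, hq, prod_Icc_natCast_add_eq_factorial_mul_choose]
  · obtain ⟨m, hm⟩ : N ∣ S - n := (Nat.modEq_iff_dvd' hlt.le).mp h.symm
    have hS' : S = n + N * m := by omega
    have hm1 : 1 ≤ m := Nat.pos_of_ne_zero fun h0 => by rw [h0, mul_zero, add_zero] at hS'; omega
    have hmk : m ≤ k := Nat.lt_succ_iff.mp <| Nat.lt_of_mul_lt_mul_left (a := N) (by nlinarith)
    rw [natCard_add_mul_sum_eq_of_lt hlt, Nat.cast_zero, mul_zero]
    refine prod_eq_zero (mem_Icc.2 ⟨hm1, hmk⟩) ?_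
    rw [hS']; push_cast; field_simp; ring

end Fiber

section Digits

variable (p k : ℕ)

def lowSum (ε : Fin (k + 1) → ℕ) (t : Fin k → ℕ) : ℕ :=
  ∑ i : Fin k, p ^ ((i : ℕ) + 1) * t i + ∑ i : Fin (k + 1), p ^ (i : ℕ) * ε i

def midDigits (x : Fin (k + 1) → ℕ) (i : Fin k) : ℕ := x i.castSucc / p % p ^ (k - i)

def highDigits (x : Fin (k + 1) → ℕ) (i : Fin (k + 1)) : ℕ := x i / p / p ^ (k - i)

-- `a_i = ε_i + p t_i + p ^ (k + 1 - i) s_i`, with `t` extended by `t_k = 0`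
def ofDigits (ε : Fin (k + 1) → ℕ) (t : Fin k → ℕ) (s : Fin (k + 1) → ℕ) (i : Fin (k + 1)) : ℕ :=
  ε i + p * (Fin.snoc (α := fun _ => ℕ) t 0 i + p ^ (k - i) * s i)

variable {p k}

theorem snoc_midDigits (x : Fin (k + 1) → ℕ) (i : Fin (k + 1)) :
    Fin.snoc (α := fun _ => ℕ) (midDigits p k x) 0 i = x i / p % p ^ (k - i) := by
  induction i using Fin.lastCases with
  | last => simp [Nat.mod_one]
  | cast i => simp [midDigits]

theorem ofDigits_digits (x : Fin (k + 1) → ℕ) :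
    ofDigits p k (fun i => x i % p) (midDigits p k x) (highDigits p k x) = x := by
  funext i
  rw [ofDigits, snoc_midDigits, highDigits, Nat.mod_add_div, Nat.mod_add_div]

theorem sum_ofDigits_mul_pow (ε : Fin (k + 1) → ℕ) (t : Fin k → ℕ) (s : Fin (k + 1) → ℕ) :
    ∑ i, ofDigits p k ε t s i * p ^ (i : ℕ) = lowSum p k ε t + p ^ (k + 1) * ∑ i, s i := by
  have hterm : ∀ i : Fin (k + 1), ofDigits p k ε t s i * p ^ (i : ℕ)
      = p ^ ((i : ℕ) + 1) * Fin.snoc (α := fun _ => ℕ) t 0 i + p ^ (i : ℕ) * ε i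
        + p ^ (k + 1) * s i := by
    intro i
    have : p ^ (k + 1) = p ^ ((i : ℕ) + 1) * p ^ (k - i) := by
      rw [← pow_add]; congr 1; omega
    rw [ofDigits, this]; ring
  simp only [hterm, sum_add_distrib, ← mul_sum, lowSum, Fin.sum_univ_castSucc (n := k),
    Fin.snoc_castSucc, Fin.snoc_last, mul_zero, Fin.val_castSucc]
  ring

variable {ε : Fin (k + 1) → ℕ} {t : Fin k → ℕ}

theorem ofDigits_mod (hε : ∀ i, ε i < p) (s : Fin (k + 1) → ℕ) (i : Fin (k + 1)) :
    ofDigits p k ε t s i % p = ε i := by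
  rw [ofDigits, Nat.add_mul_mod_self_left, Nat.mod_eq_of_lt (hε i)]

theorem ofDigits_div (hε : ∀ i, ε i < p) (s : Fin (k + 1) → ℕ) (i : Fin (k + 1)) :
    ofDigits p k ε t s i / p = Fin.snoc (α := fun _ => ℕ) t 0 i + p ^ (k - i) * s i := by
  rw [ofDigits, Nat.add_mul_div_left _ _ ((Nat.zero_le _).trans_lt (hε i)),
    Nat.div_eq_of_lt (hε i), zero_add]

theorem snoc_lt (ht : ∀ i : Fin k, t i < p ^ (k - i)) (i : Fin (k + 1)) :
    Fin.snoc (α := fun _ => ℕ) t 0 i < p ^ (k - i) := by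
  induction i using Fin.lastCases with
  | last => simp
  | cast i => simpa using ht i

theorem midDigits_ofDigits (hε : ∀ i, ε i < p) (ht : ∀ i : Fin k, t i < p ^ (k - i))
    (s : Fin (k + 1) → ℕ) : midDigits p k (ofDigits p k ε t s) = t := by
  funext i
  rw [midDigits, ofDigits_div hε, Fin.val_castSucc, Nat.add_mul_mod_self_left, Fin.snoc_castSucc]
  exact Nat.mod_eq_of_lt (ht i)

theorem highDigits_ofDigits (hε : ∀ i, ε i < p) (ht : ∀ i : Fin k, t i < p ^ (k - i))
    (s : Fin (k + 1) → ℕ) : highDigits p k (ofDigits p k ε t s) = s := by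
  funext i
  rw [highDigits, ofDigits_div hε,
    Nat.add_mul_div_left _ _ (pow_pos ((Nat.zero_le _).trans_lt (hε i)) _),
    Nat.div_eq_of_lt (snoc_lt ht i), zero_add]

theorem lowSum_lt (hp : 2 ≤ p) (hε : ∀ i, ε i ≤ 1) (ht : ∀ i : Fin k, t i < p ^ (k - i)) :
    lowSum p k ε t < (k + 1) * p ^ (k + 1) := by
  have hmid : ∑ i : Fin k, p ^ ((i : ℕ) + 1) * t i ≤ k * p ^ (k + 1) := by
    simpa using sum_le_card_nsmul univ (fun i : Fin k => p ^ ((i : ℕ) + 1) * t i) (p ^ (k + 1))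
      fun i _ => calc p ^ ((i : ℕ) + 1) * t i ≤ p ^ ((i : ℕ) + 1) * p ^ (k - i) :=
            Nat.mul_le_mul_left _ (ht i).le
        _ = p ^ (k + 1) := by rw [← pow_add]; congr 1; omega
  have hlow : ∑ i : Fin (k + 1), p ^ (i : ℕ) * ε i < p ^ (k + 1) :=
    calc ∑ i : Fin (k + 1), p ^ (i : ℕ) * ε i ≤ ∑ i : Fin (k + 1), p ^ (i : ℕ) :=
          sum_le_sum fun i _ => mul_le_of_le_one_right (Nat.zero_le _) (hε i)
      _ = ∑ i ∈ range (k + 1), p ^ i := Fin.sum_univ_eq_sum_range _ _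
      _ < p ^ (k + 1) := Nat.geomSum_lt hp fun i hi => mem_range.1 hi
  rw [lowSum, add_one_mul]
  omega

end Digits

section Decomposition

variable {p k : ℕ}

theorem le_one_of_mem_piFinset_zero_one {ι : Type*} [Fintype ι] [DecidableEq ι] {ε : ι → ℕ}
    (hε : ε ∈ Fintype.piFinset fun _ => ({0, 1} : Finset ℕ)) (i : ι) : ε i ≤ 1 := by
  have := Fintype.mem_piFinset.1 hε i
  simp only [mem_insert, mem_singleton] at this
  omega

theorem lt_of_mem_piFinset_zero_one (hp : 2 ≤ p) {ε : Fin (k + 1) → ℕ}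
    (hε : ε ∈ Fintype.piFinset fun _ => ({0, 1} : Finset ℕ)) (i : Fin (k + 1)) : ε i < p :=
  (le_one_of_mem_piFinset_zero_one hε i).trans_lt hp

def digitsEquiv (hp : 2 ≤ p) (n : ℕ) :
    {x : Fin (k + 1) → ℕ | (∑ i, x i * p ^ (i : ℕ) = n) ∧ ∀ i, x i % p = 0 ∨ x i % p = 1} ≃
      Σ e : ((Fintype.piFinset fun _ : Fin (k + 1) => ({0, 1} : Finset ℕ)) ×ˢ
          (Fintype.piFinset fun i : Fin k => range (p ^ (k - i))) : Finset _),
        {s : Fin (k + 1) → ℕ // lowSum p k e.1.1 e.1.2 + p ^ (k + 1) * ∑ i, s i = n} where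
  toFun x := ⟨⟨(fun i => x.1 i % p, midDigits p k x.1), by
      simp only [mem_product, Fintype.mem_piFinset, mem_insert, mem_singleton, mem_range]
      exact ⟨x.2.2, fun i => Nat.mod_lt _ (by positivity)⟩⟩,
    ⟨highDigits p k x.1, by rw [← sum_ofDigits_mul_pow, ofDigits_digits]; exact x.2.1⟩⟩
  invFun e := ⟨ofDigits p k e.1.1.1 e.1.1.2 e.2.1, by
    have he := mem_product.1 e.1.2
    refine ⟨by rw [sum_ofDigits_mul_pow]; exact e.2.2, fun i => ?_⟩
    rw [ofDigits_mod (lt_of_mem_piFinset_zero_one hp he.1)]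
    simpa using Fintype.mem_piFinset.1 he.1 i⟩
  left_inv x := Subtype.ext (ofDigits_digits x.1)
  right_inv e := by
    obtain ⟨hε, ht⟩ := mem_product.1 e.1.2
    have hε := lt_of_mem_piFinset_zero_one hp hε
    have ht : ∀ i, e.1.1.2 i < p ^ (k - i) := fun i => mem_range.1 (Fintype.mem_piFinset.1 ht i)
    exact Sigma.subtype_ext
      (Subtype.ext (Prod.ext (funext (ofDigits_mod hε _)) (midDigits_ofDigits hε ht _)))
      (highDigits_ofDigits hε ht _)

theorem ncard_eq_sum_natCard (hp : 2 ≤ p) (n : ℕ) :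
    Set.ncard {x : Fin (k + 1) → ℕ | (∑ i, x i * p ^ (i : ℕ) = n) ∧ ∀ i, x i % p = 0 ∨ x i % p = 1}
      = ∑ ε ∈ Fintype.piFinset (fun _ : Fin (k + 1) => ({0, 1} : Finset ℕ)),
          ∑ t ∈ Fintype.piFinset (fun i : Fin k => range (p ^ (k - i))),
            Nat.card {s : Fin (k + 1) → ℕ // lowSum p k ε t + p ^ (k + 1) * ∑ i, s i = n} := by
  have := fun S => finite_add_mul_sum_eq (ι := Fin (k + 1)) (S := S) (n := n)
    (pow_pos (by omega : 0 < p) (k + 1))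
  rw [← Nat.card_coe_set_eq, Nat.card_congr (digitsEquiv hp n), Nat.card_sigma]
  exact (sum_coe_sort _ fun e : (Fin (k + 1) → ℕ) × (Fin k → ℕ) =>
    Nat.card {s : Fin (k + 1) → ℕ // lowSum p k e.1 e.2 + p ^ (k + 1) * ∑ i, s i = n}).trans
    (sum_product _ _ _)

end Decomposition

end StableCohomologyCount

open StableCohomologyCount

theorem stmt_12_general (p n k : ℕ) (hp : 2 ≤ p) :
    (Set.ncard {x : Fin (k + 1) → ℕ |
        (∑ i : Fin (k + 1), x i * p ^ (i : ℕ) = n)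
        ∧ ∀ i, x i % p = 0 ∨ x i % p = 1} : ℚ) =
      (1 / (Nat.factorial k : ℚ)) *
        ∑ ε ∈ Fintype.piFinset (fun _ : Fin (k + 1) => ({0, 1} : Finset ℕ)),
          ∑ t ∈ (Fintype.piFinset fun i : Fin k => Finset.range (p ^ (k - (i : ℕ)))).filter
              (fun t => (∑ i : Fin k, p ^ ((i : ℕ) + 1) * t i
                  + ∑ i : Fin (k + 1), p ^ (i : ℕ) * ε i) % p ^ (k + 1) = n % p ^ (k + 1)),
            ∏ ℓ ∈ Finset.Icc 1 k,
              (((n : ℚ) - ∑ i : Fin k, (p : ℚ) ^ ((i : ℕ) + 1) * (t i : ℚ)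
                  - ∑ i : Fin (k + 1), (p : ℚ) ^ (i : ℕ) * (ε i : ℚ)) / (p : ℚ) ^ (k + 1)
                + (ℓ : ℚ)) := by
  have hN : 0 < p ^ (k + 1) := pow_pos (by omega) _
  rw [ncard_eq_sum_natCard hp n, eq_comm, one_div, inv_mul_eq_iff_eq_mul₀ (by positivity)]
  push_cast
  rw [mul_sum]
  refine sum_congr rfl fun ε hε => ?_
  rw [sum_filter, mul_sum]
  refine sum_congr rfl fun t ht => ?_
  split_ifs with hcong
  · have ht : ∀ i, t i < p ^ (k - i) := fun i => mem_range.1 (Fintype.mem_piFinset.1 ht i)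
    rw [← prod_Icc_div_add_eq_factorial_mul_natCard hN
      (lowSum_lt hp (le_one_of_mem_piFinset_zero_one hε) ht) hcong]
    refine prod_congr rfl fun ℓ _ => ?_
    simp only [lowSum]
    push_cast
    ring
  · rw [natCard_add_mul_sum_eq_of_mod_ne (S := lowSum p k ε t) hcong]
    simp

/-- With `k = ⌊log_p n⌋ ≥ 1`, the cardinality of `A_{p,n}` (tuples
`(a_0,…,a_k)` of nonnegative integers with `∑ a_i p^i = n` and
`a_i ≡ 0,1 (mod p)`) equals
`(1/k!) ∑ ∏_{ℓ=1}^{k} ((n - ∑_{i=0}^{k-1} p^{i+1} j_i - ∑_{i=0}^k p^i ε_i)/p^{k+1} + ℓ)`,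
the sum over `ε ∈ {0,1}^{k+1}` and `0 ≤ j_i ≤ p^{k-i} - 1` with
`∑ p^{i+1} j_i + ∑ p^i ε_i ≡ n (mod p^{k+1})`.
(For `p` prime this is the total stable cohomology dimension `h_st(-n,n)`.) -/
theorem stmt_12 (p n k : ℕ) (hp : 2 ≤ p) (hn : 1 ≤ n)
    (hk : k = Nat.log p n) (hk1 : 1 ≤ k) :
    (Set.ncard {x : Fin (k + 1) → ℕ |
        (∑ i : Fin (k + 1), x i * p ^ (i : ℕ) = n)
        ∧ ∀ i, x i % p = 0 ∨ x i % p = 1} : ℚ) =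
      (1 / (Nat.factorial k : ℚ)) *
        ∑ ε ∈ Fintype.piFinset (fun _ : Fin (k + 1) => ({0, 1} : Finset ℕ)),
          ∑ t ∈ (Fintype.piFinset fun i : Fin k => Finset.range (p ^ (k - (i : ℕ)))).filter
              (fun t => (∑ i : Fin k, p ^ ((i : ℕ) + 1) * t i
                  + ∑ i : Fin (k + 1), p ^ (i : ℕ) * ε i) % p ^ (k + 1) = n % p ^ (k + 1)),
            ∏ ℓ ∈ Finset.Icc 1 k,
              (((n : ℚ) - ∑ i : Fin k, (p : ℚ) ^ ((i : ℕ) + 1) * (t i : ℚ)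
                  - ∑ i : Fin (k + 1), (p : ℚ) ^ (i : ℕ) * (ε i : ℚ)) / (p : ℚ) ^ (k + 1)
                + (ℓ : ℚ)) :=
  stmt_12_general p n k hp
end
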